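/- arXiv:2403.17167 — 8 statements merged into one kernel-verified Lean document; each statement's English description precedes it below -/
import Mathlib

section
/- Let x be a permutation of a finite set S, and let R_1, R_2 ⊆ S be orbits of x of cardinalities r_1 and r_2. Let T be the set of unordered pairs {a,b} of distinct elements with a ∈ R_1 and b ∈ R_2. Then the orbits of the induced action of x on T consist of: (1) gcd(r_1,r_2) orbits, each of cardinality lcm(r_1,r_2), if R_1 ≠ R_2; (2) (r_1−1)/2 orbits, each of cardinality r_1, if R_1 = R_2 and r_1 is odd; (3) one orbit of cardinality r_1/2 together with r_1/2 − 1 orbits of cardinality r_1, if R_1 = R_2 and r_1 is even. -/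
open Pointwise MulAction Function

set_option linter.unusedSectionVars false
set_option maxHeartbeats 1000000

section
variable {S : Type*} [Fintype S] [DecidableEq S] (x : Equiv.Perm S)

lemma smul_pair (g : Equiv.Perm S) (a b : S) : g • ({a, b} : Finset S) = {g • a, g • b} := by
  rw [show ({a,b} : Finset S) = insert a {b} from rfl, Finset.smul_finset_insert,
    Finset.smul_finset_singleton]

lemma finset_pair_eq_pair_iff {a b c d : S} :
    ({a, b} : Finset S) = {c, d} ↔ a = c ∧ b = d ∨ a = d ∧ b = c := by
  rw [← Finset.coe_inj]
  simp only [Finset.coe_insert, Finset.coe_singleton]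
  exact Set.pair_eq_pair_iff

lemma pow_smul_comm_nat {α : Type*} [MulAction (Equiv.Perm S) α] (n k : ℕ) (a : α) :
    x ^ n • x ^ k • a = x ^ k • x ^ n • a := by
  rw [smul_smul, smul_smul, ← pow_add, ← pow_add, add_comm]

lemma pow_smul_comm_int {α : Type*} [MulAction (Equiv.Perm S) α] (n : ℕ) (k : ℤ) (a : α) :
    x ^ n • x ^ k • a = x ^ k • x ^ n • a := by
  rw [smul_smul, smul_smul, ← zpow_natCast, ← zpow_add, ← zpow_add, add_comm]

lemma minimalPeriod_eq_of_forall {α : Type*} [MulAction (Equiv.Perm S) α] (p : α) (c : ℕ)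
    (h : ∀ n : ℕ, x ^ n • p = p ↔ c ∣ n) : minimalPeriod (x • ·) p = c :=
  Nat.dvd_antisymm (pow_smul_eq_iff_minimalPeriod_dvd.1 ((h c).2 dvd_rfl))
    ((h _).1 (pow_smul_eq_iff_minimalPeriod_dvd.2 dvd_rfl))

lemma minimalPeriod_smul_zpow (k : ℤ) (a : S) :
    minimalPeriod (x • ·) (x ^ k • a) = minimalPeriod (x • ·) a := by
  have key : ∀ n : ℕ, x ^ n • (x ^ k • a) = x ^ k • a ↔ x ^ n • a = a := fun n => by
    rw [pow_smul_comm_int]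
    exact smul_left_cancel_iff _
  exact Nat.dvd_antisymm
    (pow_smul_eq_iff_minimalPeriod_dvd.1 ((key _).2 (pow_smul_eq_iff_minimalPeriod_dvd.2 dvd_rfl)))
    (pow_smul_eq_iff_minimalPeriod_dvd.1 ((key _).1 (pow_smul_eq_iff_minimalPeriod_dvd.2 dvd_rfl)))

lemma mem_orbit_zpowers_iff {α : Type*} [MulAction (Equiv.Perm S) α] (q p : α) :
    q ∈ orbit (Subgroup.zpowers x) p ↔ ∃ k : ℤ, x ^ k • p = q := by
  rw [mem_orbit_iff]
  constructor
  · rintro ⟨⟨g, k, rfl⟩, h⟩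
    exact ⟨k, h⟩
  · rintro ⟨k, h⟩
    exact ⟨⟨x ^ k, k, rfl⟩, h⟩

lemma zpow_smul_mem_orbit {α : Type*} [MulAction (Equiv.Perm S) α] (k : ℤ) {a b : α}
    (h : a ∈ orbit (Subgroup.zpowers x) b) :
    x ^ k • a ∈ orbit (Subgroup.zpowers x) b := by
  rw [← orbit_eq_iff.mpr h]
  exact (mem_orbit_zpowers_iff x _ a).2 ⟨k, rfl⟩

lemma card_orbit_eq_minimalPeriod {α : Type*} [Finite α] [MulAction (Equiv.Perm S) α] (p : α) :
    Nat.card (orbit (Subgroup.zpowers x) p) = minimalPeriod (x • ·) p := by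
  haveI := Fintype.ofFinite (orbit (Subgroup.zpowers x) p)
  rw [Nat.card_eq_fintype_card, minimalPeriod_eq_card]

lemma minimalPeriod_point_pos (a : S) : 0 < minimalPeriod (x • ·) a := by
  haveI : Finite (orbit (Subgroup.zpowers x) a) := inferInstance
  exact Nat.pos_of_ne_zero (NeZero.ne _)

lemma exists_pow_of_mem_orbit' {a b : S} (hb : b ∈ orbit (Subgroup.zpowers x) a) (hne : b ≠ a) :
    ∃ d : ℕ, 0 < d ∧ d < minimalPeriod (x • ·) a ∧ b = x ^ d • a := by
  obtain ⟨k, hk⟩ := (mem_orbit_zpowers_iff x b a).1 hb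
  set m := minimalPeriod (x • ·) a with hm
  have hmpos : 0 < m := minimalPeriod_point_pos x a
  have hmod : x ^ (k % (m : ℤ)) • a = x ^ k • a := zpow_smul_mod_minimalPeriod _ _ k
  have h0 : 0 ≤ k % (m : ℤ) := Int.emod_nonneg k (by exact_mod_cast hmpos.ne')
  have hlt : k % (m : ℤ) < (m : ℤ) := Int.emod_lt_of_pos k (by exact_mod_cast hmpos)
  refine ⟨(k % (m : ℤ)).toNat, ?_, ?_, ?_⟩
  · rcases Nat.eq_zero_or_pos (k % (m : ℤ)).toNat with h | h
    · exfalso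
      apply hne
      rw [← hk, ← hmod]
      have : k % (m : ℤ) = 0 := by omega
      simp [this]
    · exact h
  · omega
  · rw [← hk, ← hmod, ← zpow_natCast, Int.toNat_of_nonneg h0]

lemma pair_char_distinct {a b : S} (hb : b ∉ orbit (Subgroup.zpowers x) a) (n : ℕ) :
    x ^ n • ({a, b} : Finset S) = {a, b} ↔
      Nat.lcm (minimalPeriod (x • ·) a) (minimalPeriod (x • ·) b) ∣ n := by
  rw [smul_pair, finset_pair_eq_pair_iff]
  constructor
  · rintro (⟨h1, h2⟩ | ⟨h1, h2⟩)
    · exact Nat.lcm_dvd (pow_smul_eq_iff_minimalPeriod_dvd.1 h1)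
        (pow_smul_eq_iff_minimalPeriod_dvd.1 h2)
    · exact absurd (h1 ▸ ⟨⟨x ^ n, ⟨(n : ℤ), zpow_natCast x n⟩⟩, rfl⟩ :
        b ∈ orbit (Subgroup.zpowers x) a) hb
  · intro h
    exact Or.inl ⟨pow_smul_eq_iff_minimalPeriod_dvd.2 ((Nat.dvd_lcm_left _ _).trans h),
      pow_smul_eq_iff_minimalPeriod_dvd.2 ((Nat.dvd_lcm_right _ _).trans h)⟩

lemma pair_char_same (a : S) (d : ℕ) (hd : 0 < d) (hdm : d < minimalPeriod (x • ·) a) (n : ℕ) :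
    x ^ n • ({a, x ^ d • a} : Finset S) = {a, x ^ d • a} ↔
      (minimalPeriod (x • ·) a ∣ n ∨ (2 * d = minimalPeriod (x • ·) a ∧ d ∣ n)) := by
  set m := minimalPeriod (x • ·) a with hm
  have fix : ∀ k : ℕ, m ∣ k → x ^ k • a = a := fun k hk =>
    pow_smul_eq_iff_minimalPeriod_dvd.2 hk
  rw [smul_pair, finset_pair_eq_pair_iff]
  constructor
  · rintro (⟨h1, h2⟩ | ⟨h1, h2⟩)
    · exact Or.inl (pow_smul_eq_iff_minimalPeriod_dvd.1 h1)
    · rw [smul_smul, ← pow_add] at h2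
      have hnd : m ∣ n + d := pow_smul_eq_iff_minimalPeriod_dvd.1 h2
      have h2d : x ^ (2 * d) • a = a := by
        have h3 : x ^ d • x ^ n • a = x ^ d • x ^ d • a := congrArg _ h1
        rw [smul_smul, smul_smul, ← pow_add, ← pow_add, add_comm d n] at h3
        rw [pow_smul_eq_iff_minimalPeriod_dvd.2 hnd] at h3
        rw [two_mul, ← h3]
      have hm2d : m ∣ 2 * d := pow_smul_eq_iff_minimalPeriod_dvd.1 h2d
      have h2dm : 2 * d = m := Nat.eq_of_dvd_of_lt_two_mul (by omega) hm2d (by omega)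
      refine Or.inr ⟨h2dm, ?_⟩
      have hdnd : d ∣ n + d := (show d ∣ m from ⟨2, by omega⟩).trans hnd
      rw [add_comm] at hdnd
      exact (Nat.dvd_add_right (dvd_refl d)).1 hdnd
  · rintro (h | ⟨h2dm, t, rfl⟩)
    · refine Or.inl ⟨fix n h, ?_⟩
      rw [pow_smul_comm_nat, fix n h]
    · rcases Nat.even_or_odd t with ⟨u, rfl⟩ | ⟨u, rfl⟩
      · have hmn : m ∣ d * (u + u) := ⟨u, by rw [← h2dm]; ring⟩
        refine Or.inl ⟨fix _ hmn, ?_⟩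
        rw [pow_smul_comm_nat, fix _ hmn]
      · refine Or.inr ⟨?_, ?_⟩
        · have hn : d * (2 * u + 1) = m * u + d := by rw [← h2dm]; ring
          rw [hn, pow_add, mul_smul, pow_smul_comm_nat, fix _ ⟨u, rfl⟩]
        · rw [smul_smul, ← pow_add]
          have hn : d * (2 * u + 1) + d = m * (u + 1) := by rw [← h2dm]; ring
          rw [hn]
          exact fix _ ⟨u + 1, rfl⟩
end

lemma mul_card_orbits {α : Type*} [Finite α] {G : Type*} [Group G] [MulAction G α]
    (T : Set α) (c : ℕ)
    (hinv : ∀ p ∈ T, orbit G p ⊆ T)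
    (hcard : ∀ p ∈ T, Nat.card (orbit G p) = c) :
    Nat.card {o : Set α // ∃ p ∈ T, o = orbit G p} * c = Nat.card T := by
  classical
  set Ω := {o : Set α // ∃ p ∈ T, o = orbit G p} with hΩ
  haveI : Fintype α := Fintype.ofFinite α
  haveI : Fintype Ω := Fintype.ofFinite Ω
  haveI : Fintype T := Fintype.ofFinite T
  set f : T → Ω := fun p => ⟨orbit G p.1, p.1, p.2, rfl⟩ with hf
  have key : ∀ o : Ω, Fintype.card {p : T // f p = o} = c := by
    rintro ⟨o, q, hqT, rfl⟩
    rw [← Nat.card_eq_fintype_card, ← hcard q hqT]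
    apply Nat.card_congr
    refine ⟨fun p => ⟨p.1.1, ?_⟩, fun y => ⟨⟨y.1, hinv q hqT y.2⟩, ?_⟩, fun p => ?_, fun y => ?_⟩
    · have h1 : orbit G p.1.1 = orbit G q := congrArg Subtype.val p.2
      exact h1.subset (mem_orbit_self _)
    · exact Subtype.ext ((orbit_eq_iff).2 y.2)
    · exact Subtype.ext (Subtype.ext rfl)
    · exact Subtype.ext rfl
  calc Nat.card Ω * c = ∑ o : Ω, Fintype.card {p : T // f p = o} := by
        simp [key, Finset.sum_const, Nat.card_eq_fintype_card, mul_comm]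
    _ = Fintype.card (Σ o : Ω, {p : T // f p = o}) := Fintype.card_sigma.symm
    _ = Nat.card T := by
        rw [Fintype.card_congr (Equiv.sigmaFiberEquiv f), Nat.card_eq_fintype_card]

/-- Orbits of a permutation on unordered pairs drawn from two orbits on points. -/
theorem stmt0 {S : Type*} [Fintype S] [DecidableEq S] (x : Equiv.Perm S)
    (R₁ R₂ : Set S) (a₁ a₂ : S)
    (hR₁ : R₁ = MulAction.orbit (Subgroup.zpowers x) a₁)
    (hR₂ : R₂ = MulAction.orbit (Subgroup.zpowers x) a₂)
    (r₁ r₂ : ℕ) (hr₁ : r₁ = Nat.card R₁) (hr₂ : r₂ = Nat.card R₂)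
    (T : Set (Finset S))
    (hT : T = {p : Finset S | ∃ a ∈ R₁, ∃ b ∈ R₂, a ≠ b ∧ p = {a, b}}) :
    (R₁ ≠ R₂ →
      Nat.card {o : Set (Finset S) // ∃ p ∈ T, o = MulAction.orbit (Subgroup.zpowers x) p}
          = Nat.gcd r₁ r₂ ∧
      ∀ p ∈ T, Nat.card (MulAction.orbit (Subgroup.zpowers x) p) = Nat.lcm r₁ r₂) ∧
    (R₁ = R₂ → Odd r₁ →
      Nat.card {o : Set (Finset S) // ∃ p ∈ T, o = MulAction.orbit (Subgroup.zpowers x) p}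
          = (r₁ - 1) / 2 ∧
      ∀ p ∈ T, Nat.card (MulAction.orbit (Subgroup.zpowers x) p) = r₁) ∧
    (R₁ = R₂ → Even r₁ →
      Nat.card {o : Set (Finset S) // (∃ p ∈ T, o = MulAction.orbit (Subgroup.zpowers x) p) ∧
          Nat.card o = r₁ / 2} = 1 ∧
      Nat.card {o : Set (Finset S) // (∃ p ∈ T, o = MulAction.orbit (Subgroup.zpowers x) p) ∧
          Nat.card o = r₁} = r₁ / 2 - 1 ∧
      ∀ p ∈ T, Nat.card (MulAction.orbit (Subgroup.zpowers x) p) = r₁ / 2 ∨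
          Nat.card (MulAction.orbit (Subgroup.zpowers x) p) = r₁) := by
  classical
  subst hR₁ hR₂ hr₁ hr₂ hT
  set G := Subgroup.zpowers x with hG
  set R₁ := orbit G a₁ with hR₁
  set R₂ := orbit G a₂ with hR₂
  set T : Set (Finset S) := {p : Finset S | ∃ a ∈ R₁, ∃ b ∈ R₂, a ≠ b ∧ p = {a, b}} with hT
  set r₁ := Nat.card R₁ with hr₁
  set r₂ := Nat.card R₂ with hr₂
  -- basic facts
  have hr₁m : r₁ = minimalPeriod (x • ·) a₁ := card_orbit_eq_minimalPeriod x a₁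
  have hr₂m : r₂ = minimalPeriod (x • ·) a₂ := card_orbit_eq_minimalPeriod x a₂
  have hper : ∀ c : S, ∀ a : S, c ∈ orbit G a →
      minimalPeriod (x • ·) c = minimalPeriod (x • ·) a := by
    intro c a hc
    obtain ⟨k, rfl⟩ := (mem_orbit_zpowers_iff x c a).1 hc
    exact minimalPeriod_smul_zpow x k a
  have hr₁pos : 0 < r₁ := hr₁m ▸ minimalPeriod_point_pos x a₁
  have hr₂pos : 0 < r₂ := hr₂m ▸ minimalPeriod_point_pos x a₂
  have hTinv : ∀ p ∈ T, orbit G p ⊆ T := by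
    rintro p ⟨a, ha, b, hb, hab, rfl⟩ q hq
    obtain ⟨k, rfl⟩ := (mem_orbit_zpowers_iff x q _).1 hq
    refine ⟨x ^ k • a, zpow_smul_mem_orbit x k ha, x ^ k • b, zpow_smul_mem_orbit x k hb,
      fun hh => hab (smul_left_cancel _ hh), ?_⟩
    rw [smul_pair]
  -- same-orbit machinery
  have decomp : R₁ = R₂ → ∀ p ∈ T, ∃ (a : S) (d : ℕ), a ∈ R₁ ∧ 0 < d ∧ d < r₁ ∧
      p = {a, x ^ d • a} ∧ minimalPeriod (x • ·) a = r₁ := by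
    rintro h p ⟨a, ha, b, hb, hab, rfl⟩
    have hma : minimalPeriod (x • ·) a = r₁ := (hper a a₁ ha).trans hr₁m.symm
    have hb' : b ∈ orbit G a := by
      rw [orbit_eq_iff.2 ha, ← hR₁, h]
      exact hb
    obtain ⟨d, hd, hdm, rfl⟩ := exists_pow_of_mem_orbit' x hb' (Ne.symm hab)
    exact ⟨a, d, ha, hd, hma ▸ hdm, rfl, hma⟩
  have cardT_same : R₁ = R₂ → Nat.card T = r₁.choose 2 := by
    intro h
    haveI : Fintype ↥R₁ := Fintype.ofFinite _
    have hTF : T = ↑(R₁.toFinset.powersetCard 2) := by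
      ext p
      simp only [hT, Set.mem_setOf_eq, Finset.mem_coe, Finset.mem_powersetCard]
      constructor
      · rintro ⟨a, ha, b, hb, hab, rfl⟩
        refine ⟨?_, Finset.card_pair hab⟩
        intro c hc
        simp only [Finset.mem_insert, Finset.mem_singleton] at hc
        rcases hc with rfl | rfl
        · exact Set.mem_toFinset.2 ha
        · exact Set.mem_toFinset.2 (h ▸ hb)
      · rintro ⟨hsub, hcard2⟩
        obtain ⟨a, b, hab, rfl⟩ := Finset.card_eq_two.1 hcard2
        exact ⟨a, Set.mem_toFinset.1 (hsub (by simp)), b,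
          by rw [← h]; exact Set.mem_toFinset.1 (hsub (by simp)), hab, rfl⟩
    rw [Nat.card_coe_set_eq, hTF, Set.ncard_coe_finset, Finset.card_powersetCard,
      Set.toFinset_card, ← Nat.card_eq_fintype_card, ← hr₁]
  refine ⟨?_, ?_, ?_⟩
  -- Case 1 : distinct orbits
  · intro hne
    have hdisj : ∀ c, c ∈ R₁ → c ∉ R₂ := by
      intro c h1 h2
      exact hne ((orbit_eq_iff.2 h1).symm.trans (orbit_eq_iff.2 h2))
    have hcard : ∀ p ∈ T, Nat.card (orbit G p) = Nat.lcm r₁ r₂ := by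
      rintro p ⟨a, ha, b, hb, hab, rfl⟩
      have hbo : b ∉ orbit G a := by
        intro hba
        refine hdisj b ?_ hb
        rw [hR₁, ← orbit_eq_iff.2 ha]
        exact hba
      rw [card_orbit_eq_minimalPeriod, minimalPeriod_eq_of_forall x _ _
        (fun n => pair_char_distinct x hbo n), hper a a₁ ha, hper b a₂ hb, hr₁m, hr₂m]
    constructor
    · -- count: N * lcm = |T| = r₁ * r₂ = gcd * lcm
      have hmul := mul_card_orbits T (Nat.lcm r₁ r₂) hTinv hcard
      have hcT : Nat.card T = r₁ * r₂ := by
        have e : R₁ × R₂ ≃ T := by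
          refine Equiv.ofBijective
            (fun y => ⟨{y.1.1, y.2.1}, y.1.1, y.1.2, y.2.1, y.2.2,
              fun hh => hdisj y.1.1 y.1.2 (hh ▸ y.2.2), rfl⟩) ⟨?_, ?_⟩
          · rintro ⟨⟨a, ha⟩, ⟨b, hb⟩⟩ ⟨⟨a', ha'⟩, ⟨b', hb'⟩⟩ hy
            have := (finset_pair_eq_pair_iff (S := S)).1 (congrArg Subtype.val hy)
            rcases this with ⟨h1, h2⟩ | ⟨h1, h2⟩
            · simp only [Prod.mk.injEq, Subtype.mk.injEq]
              exact ⟨h1, h2⟩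
            · exact absurd (show (a : S) ∈ R₂ by rw [show a = b' from h1]; exact hb')
                (hdisj a ha)
          · rintro ⟨p, a, ha, b, hb, hab, rfl⟩
            exact ⟨⟨⟨a, ha⟩, ⟨b, hb⟩⟩, rfl⟩
        rw [← Nat.card_congr e, Nat.card_prod]
      rw [hcT] at hmul
      have hlcm : 0 < Nat.lcm r₁ r₂ :=
        Nat.pos_of_ne_zero (Nat.lcm_ne_zero hr₁pos.ne' hr₂pos.ne')
      exact Nat.eq_of_mul_eq_mul_right hlcm (hmul.trans (Nat.gcd_mul_lcm r₁ r₂).symm)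
    · exact hcard
  -- Case 2 : same orbit, odd length
  · intro h hodd
    have hall : ∀ p ∈ T, Nat.card (orbit G p) = r₁ := by
      intro p hp
      obtain ⟨a, d, ha, hd, hdr, rfl, hma⟩ := decomp h p hp
      have h2d : 2 * d ≠ r₁ := by
        obtain ⟨u, hu⟩ := hodd
        omega
      rw [card_orbit_eq_minimalPeriod]
      apply minimalPeriod_eq_of_forall x _ r₁
      intro n
      rw [pair_char_same x a d hd (by rw [hma]; exact hdr), hma]
      constructor
      · rintro (hh | ⟨hh, _⟩)
        · exact hh
        · exact absurd hh h2d
      · exact Or.inl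
    constructor
    · have hmul := mul_card_orbits T r₁ hTinv hall
      rw [cardT_same h] at hmul
      obtain ⟨u, hu⟩ := hodd
      have h1 : r₁ * (r₁ - 1) = (r₁ * u) * 2 := by
        rw [show r₁ - 1 = 2 * u by omega]
        ring
      rw [Nat.choose_two_right, h1, Nat.mul_div_cancel _ two_pos] at hmul
      have : Nat.card {o : Set (Finset S) // ∃ p ∈ T, o = orbit (↥G) p} = u :=
        Nat.eq_of_mul_eq_mul_right hr₁pos (by rw [hmul]; ring)
      rw [this]
      omega
    · exact hall
  -- Case 3 : same orbit, even length
  · intro h heven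
    obtain ⟨s, hs⟩ := heven
    have hspos : 0 < s := by omega
    set p₀ : Finset S := {a₁, x ^ s • a₁} with hp₀
    have hxsa : x ^ s • a₁ ≠ a₁ := by
      intro hh
      have h1 := pow_smul_eq_iff_minimalPeriod_dvd.1 hh
      rw [← hr₁m] at h1
      have := Nat.le_of_dvd hspos h1
      omega
    have hxs_mem : x ^ s • a₁ ∈ R₂ := by
      rw [← h, hR₁]
      exact (mem_orbit_zpowers_iff x _ a₁).2 ⟨(s : ℤ), by rw [zpow_natCast]⟩
    have hp₀T : p₀ ∈ T := ⟨a₁, mem_orbit_self _, x ^ s • a₁, hxs_mem, Ne.symm hxsa, rfl⟩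
    have hchar₀ : ∀ a : S, a ∈ R₁ → ∀ n : ℕ,
        x ^ n • ({a, x ^ s • a} : Finset S) = {a, x ^ s • a} ↔ s ∣ n := by
      intro a ha n
      have hma : minimalPeriod (x • ·) a = r₁ := (hper a a₁ ha).trans hr₁m.symm
      rw [pair_char_same x a s hspos (by rw [hma]; omega), hma]
      constructor
      · rintro (hh | ⟨_, hh⟩)
        · exact (show s ∣ r₁ from ⟨2, by omega⟩).trans hh
        · exact hh
      · intro hh
        exact Or.inr ⟨by omega, hh⟩
    have hcard₀ : Nat.card (orbit G p₀) = s := by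
      rw [card_orbit_eq_minimalPeriod]
      exact minimalPeriod_eq_of_forall x _ _ (hchar₀ a₁ (mem_orbit_self _))
    have dich : ∀ p ∈ T, (p ∉ orbit G p₀ ∧ Nat.card (orbit G p) = r₁) ∨
        (orbit G p = orbit G p₀ ∧ Nat.card (orbit G p) = s) := by
      intro p hp
      obtain ⟨a, d, ha, hd, hdr, rfl, hma⟩ := decomp h p hp
      by_cases h2d : 2 * d = r₁
      · right
        have hds : d = s := by omega
        subst hds
        constructor
        · apply orbit_eq_iff.2
          obtain ⟨k, hk⟩ := (mem_orbit_zpowers_iff x a a₁).1 ha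
          refine (mem_orbit_zpowers_iff x _ p₀).2 ⟨k, ?_⟩
          rw [hp₀, smul_pair, hk, ← pow_smul_comm_int, hk]
        · rw [card_orbit_eq_minimalPeriod]
          exact minimalPeriod_eq_of_forall x _ _ (hchar₀ a ha)
      · left
        have hc : Nat.card (orbit G ({a, x ^ d • a} : Finset S)) = r₁ := by
          rw [card_orbit_eq_minimalPeriod]
          apply minimalPeriod_eq_of_forall x _ r₁
          intro n
          rw [pair_char_same x a d hd (by rw [hma]; exact hdr), hma]
          constructor
          · rintro (hh | ⟨hh, _⟩)
            · exact hh
            · exact absurd hh h2d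
          · exact Or.inl
        refine ⟨fun hmem => ?_, hc⟩
        rw [orbit_eq_iff.2 hmem, hcard₀] at hc
        omega
    refine ⟨?_, ?_, ?_⟩
    · refine Nat.card_eq_one_iff_exists.2 ⟨⟨orbit G p₀, ⟨p₀, hp₀T, rfl⟩, ?_⟩, ?_⟩
      · rw [hcard₀]
        omega
      · rintro ⟨o, ⟨p, hpT, rfl⟩, hco⟩
        apply Subtype.ext
        rcases dich p hpT with ⟨_, hc⟩ | ⟨he, _⟩
        · rw [hc] at hco
          omega
        · exact he
    · -- orbits of full length
      set T' : Set (Finset S) := T \ orbit G p₀ with hT'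
      have hinv' : ∀ p ∈ T', orbit G p ⊆ T' := by
        rintro p ⟨hpT, hp0⟩ q hq
        refine ⟨hTinv p hpT hq, fun hq₀ => hp0 ?_⟩
        rw [← orbit_eq_iff.2 hq₀, orbit_eq_iff.2 hq]
        exact mem_orbit_self p
      have hcard' : ∀ p ∈ T', Nat.card (orbit G p) = r₁ := by
        rintro p ⟨hpT, hp0⟩
        rcases dich p hpT with ⟨_, hc⟩ | ⟨he, _⟩
        · exact hc
        · exact absurd (he ▸ mem_orbit_self p) hp0
      have hmul := mul_card_orbits T' r₁ hinv' hcard'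
      have hcT' : Nat.card T' = r₁.choose 2 - s := by
        rw [Nat.card_coe_set_eq, hT',
          Set.ncard_diff (show orbit G p₀ ⊆ T from hTinv p₀ hp₀T),
          ← Nat.card_coe_set_eq, ← Nat.card_coe_set_eq, cardT_same h, hcard₀]
      rw [hcT'] at hmul
      obtain ⟨t, rfl⟩ : ∃ t, s = t + 1 := ⟨s - 1, by omega⟩
      have hr : r₁ = 2 * t + 2 := by omega
      have h1 : r₁ * (r₁ - 1) = ((t + 1) * (2 * t + 1)) * 2 := by
        rw [hr, show 2 * t + 2 - 1 = 2 * t + 1 by omega]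
        ring
      have h2 : (t + 1) * (2 * t + 1) = r₁ * t + (t + 1) := by rw [hr]; ring
      rw [Nat.choose_two_right, h1, Nat.mul_div_cancel _ two_pos,
        Nat.sub_eq_of_eq_add h2] at hmul
      have hN : Nat.card {o : Set (Finset S) // ∃ p ∈ T', o = orbit (↥G) p} = t :=
        Nat.eq_of_mul_eq_mul_right hr₁pos (by rw [hmul]; ring)
      have hequiv : Nat.card {o : Set (Finset S) // (∃ p ∈ T, o = orbit (↥G) p) ∧
          Nat.card o = r₁} = Nat.card {o : Set (Finset S) // ∃ p ∈ T', o = orbit (↥G) p} := by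
        apply Nat.card_congr
        apply Equiv.subtypeEquivRight
        intro o
        constructor
        · rintro ⟨⟨p, hpT, rfl⟩, hco⟩
          refine ⟨p, ⟨hpT, fun hmem => ?_⟩, rfl⟩
          rw [orbit_eq_iff.2 hmem, hcard₀] at hco
          omega
        · rintro ⟨p, hpT', rfl⟩
          exact ⟨⟨p, hpT'.1, rfl⟩, hcard' p hpT'⟩
      rw [hequiv, hN]
      omega
    · intro p hp
      rcases dich p hp with ⟨_, hc⟩ | ⟨_, hc⟩
      · exact Or.inr hc
      · exact Or.inl (by rw [hc]; omega)
end

section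
/- Let x be a permutation of a finite set S. Then the number of orbits of the cyclic group ⟨x⟩ on ordered pairs (a,b) of distinct elements of S equals twice the number of orbits of ⟨x⟩ on 2-element subsets of S, minus the number of orbits of x on S having even cardinality. -/
open Pointwise MulAction

namespace StmtAux

theorem finset_pair_eq {α : Type*} [DecidableEq α] {u v a c : α}
    (h : ({u, v} : Finset α) = {a, c}) : (u = a ∧ v = c) ∨ (u = c ∧ v = a) := by
  have h' : ({u, v} : Set α) = {a, c} := by
    have := congrArg (fun s : Finset α => (s : Set α)) h
    simpa using this
  exact Set.pair_eq_pair_iff.mp h' 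

theorem mem_orbit_zpow_iff {G₀ : Type*} [Group G₀] {β : Type*} [MulAction G₀ β] (x : G₀)
    (p q : β) : q ∈ orbit (Subgroup.zpowers x) p ↔ ∃ k : ℤ, x ^ k • p = q := by
  constructor
  · rintro ⟨⟨g, k, rfl⟩, rfl⟩
    exact ⟨k, by simp [Subgroup.smul_def]⟩
  · rintro ⟨k, rfl⟩
    exact ⟨⟨x ^ k, k, rfl⟩, by simp [Subgroup.smul_def]⟩

theorem orbit_zpow_smul {G₀ : Type*} [Group G₀] {β : Type*} [MulAction G₀ β] (x : G₀)
    (k : ℤ) (p : β) :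
    orbit (Subgroup.zpowers x) (x ^ k • p) = orbit (Subgroup.zpowers x) p := by
  have : x ^ k • p = (⟨x ^ k, k, rfl⟩ : Subgroup.zpowers x) • p := rfl
  rw [this, orbit_smul]

variable {S : Type*} [Fintype S] [DecidableEq S] (x : Equiv.Perm S)

theorem card_orbit (a : S) :
    Nat.card (orbit (Subgroup.zpowers x) a) = period x a := by
  rw [period_eq_minimalPeriod, Nat.card_congr (orbitZPowersEquiv x a)]
  have : 0 < Function.minimalPeriod (x • ·) a := by
    rw [← period_eq_minimalPeriod]
    exact period_pos_of_orderOf_pos (orderOf_pos x) a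
  simp [Nat.card_eq_fintype_card, ZMod.card]

theorem period_pos (a : S) : 0 < period x a :=
  period_pos_of_orderOf_pos (orderOf_pos x) a

theorem zpow_smul_comm (j k : ℤ) (b : S) :
    x ^ j • (x ^ k • b) = x ^ k • (x ^ j • b) := by
  rw [smul_smul, smul_smul, ← zpow_add, ← zpow_add, add_comm]

theorem period_zpow_smul (k : ℤ) (a : S) : period x (x ^ k • a) = period x a := by
  have key : ∀ (m : ℕ) (b : S), x ^ m • (x ^ k • b) = x ^ k • b ↔ x ^ m • b = b := by
    intro m b
    rw [← zpow_natCast x m, zpow_smul_comm, smul_left_cancel_iff]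
  apply Nat.dvd_antisymm
  · rw [← pow_smul_eq_iff_period_dvd, key, pow_period_smul]
  · rw [← pow_smul_eq_iff_period_dvd, ← key, pow_period_smul]

theorem flip_char {a : S} {k : ℤ} (h2 : x ^ (2 * k) • a = a) (h1 : x ^ k • a ≠ a) :
    Even (period x a) ∧ x ^ ((period x a / 2 : ℕ) : ℤ) • a = x ^ k • a := by
  set n := period x a with hn
  have hpos : 0 < n := period_pos x a
  have hd2 : (n : ℤ) ∣ 2 * k := by rwa [← zpow_smul_eq_iff_period_dvd]
  have hd1 : ¬ (n : ℤ) ∣ k := by rwa [← zpow_smul_eq_iff_period_dvd]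
  have heven : Even n := by
    by_contra hodd
    obtain ⟨m, hm⟩ := Nat.not_even_iff_odd.mp hodd
    apply hd1
    have d1 : (n : ℤ) ∣ n * k := Dvd.intro k rfl
    have d2 : (n : ℤ) ∣ (2 * m) * k := by
      obtain ⟨t, ht⟩ := hd2
      exact ⟨m * t, by
        rw [show ((n:ℤ) * ((m:ℤ) * t)) = (m:ℤ) * ((n:ℤ) * t) by ring, ← ht]; ring⟩
    have := dvd_sub d1 d2
    have hnm : (n : ℤ) * k - (2 * m) * k = k := by
      have : (n : ℤ) = 2 * m + 1 := by exact_mod_cast hm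
      rw [this]; ring
    rwa [hnm] at this
  refine ⟨heven, ?_⟩
  obtain ⟨m, hm⟩ := heven
  have hmn : n = 2 * m := by omega
  have hmpos : 0 < m := by omega
  have hmk : (m : ℤ) ∣ k := by
    obtain ⟨t, ht⟩ := hd2
    refine ⟨t, ?_⟩
    have h2' : (2 : ℤ) * ((m : ℤ) * t) = (n : ℤ) * t := by push_cast [hmn]; ring
    have h2'' : (2 : ℤ) * k = 2 * ((m : ℤ) * t) := by rw [h2', ← ht]
    linarith
  obtain ⟨t, ht⟩ := hmk
  have hodd : Odd t := by
    rcases Int.even_or_odd t with ⟨u, hu⟩ | h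
    · exfalso; apply hd1
      refine ⟨u, ?_⟩
      rw [ht, hu]; push_cast [hmn]; ring
    · exact h
  obtain ⟨u, hu⟩ := hodd
  have hk : k = (n : ℤ) * u + m := by rw [ht, hu]; push_cast [hmn]; ring
  have : x ^ k • a = x ^ (m : ℤ) • (x ^ ((n : ℤ) * u) • a) := by
    rw [smul_smul, ← zpow_add, hk, add_comm]
  have hhalf : (n / 2 : ℕ) = m := by omega
  rw [hhalf, this, zpow_smul_eq_iff_period_dvd.mpr ⟨u, rfl⟩]

theorem flip_mk {a : S} (h : Even (period x a)) :
    x ^ (period x a / 2) • a ≠ a ∧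
      x ^ (period x a / 2) • (x ^ (period x a / 2) • a) = a := by
  set n := period x a with hn
  have hpos : 0 < n := period_pos x a
  obtain ⟨m, hm⟩ := h
  have hmn : n / 2 = m := by omega
  constructor
  · apply pow_smul_ne_of_lt_period (by omega) (by omega)
  · rw [smul_smul, ← pow_add]
    have : n / 2 + n / 2 = n := by omega
    rw [this, pow_period_smul]


abbrev OA := {o : Set (S × S) //
    ∃ p : S × S, p.1 ≠ p.2 ∧ o = orbit (Subgroup.zpowers x) p}

abbrev OB := {o : Set (Finset S) //
    ∃ s : Finset S, s.card = 2 ∧ o = orbit (Subgroup.zpowers x) s}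

abbrev OC := {o : Set S //
    (∃ a : S, o = orbit (Subgroup.zpowers x) a) ∧ Even (Nat.card o)}

def toBpair (p : S × S) (hp : p.1 ≠ p.2) : OB x :=
  ⟨orbit (Subgroup.zpowers x) ({p.1, p.2} : Finset S), {p.1, p.2}, Finset.card_pair hp, rfl⟩

def toBpt (a : S) (h : Even (period x a)) : OB x :=
  ⟨orbit (Subgroup.zpowers x) ({a, x ^ (period x a / 2) • a} : Finset S),
    {a, x ^ (period x a / 2) • a}, Finset.card_pair (Ne.symm (flip_mk x h).1), rfl⟩

theorem smul_pair (k : ℤ) (a c : S) :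
    x ^ k • ({a, c} : Finset S) = {x ^ k • a, x ^ k • c} := by
  rw [Finset.smul_finset_insert, Finset.smul_finset_singleton]

theorem toBpair_eq {p q : S × S} (hp : p.1 ≠ p.2) (hq : q.1 ≠ q.2)
    (h : orbit (Subgroup.zpowers x) p = orbit (Subgroup.zpowers x) q) :
    toBpair x p hp = toBpair x q hq := by
  obtain ⟨k, hk⟩ := (mem_orbit_zpow_iff x p q).mp (by rw [h]; exact mem_orbit_self q)
  apply Subtype.ext
  show orbit _ _ = orbit _ _
  have : ({q.1, q.2} : Finset S) = x ^ k • ({p.1, p.2} : Finset S) := by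
    rw [smul_pair, ← hk]; rfl
  rw [this, orbit_zpow_smul]

theorem toBpt_eq {a b : S} (ha : Even (period x a)) (hb : Even (period x b))
    (h : orbit (Subgroup.zpowers x) a = orbit (Subgroup.zpowers x) b) :
    toBpt x a ha = toBpt x b hb := by
  obtain ⟨k, hk⟩ := (mem_orbit_zpow_iff x a b).mp (by rw [h]; exact mem_orbit_self b)
  have hper : period x b = period x a := by rw [← hk, period_zpow_smul]
  apply Subtype.ext
  show orbit _ _ = orbit _ _
  have : ({b, x ^ (period x b / 2) • b} : Finset S)
      = x ^ k • ({a, x ^ (period x a / 2) • a} : Finset S) := by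
    rw [smul_pair, hper, ← hk]
    congr 1
    rw [← zpow_natCast x (period x a / 2), zpow_smul_comm]
  rw [this, orbit_zpow_smul]

theorem choose_even (o : OC x) : Even (period x o.2.1.choose) := by
  have he := o.2.2
  rw [o.2.1.choose_spec, card_orbit] at he
  exact he

noncomputable def Phi : (OA x) ⊕ (OC x) → OB x
  | .inl o => toBpair x o.2.choose o.2.choose_spec.1
  | .inr o => toBpt x o.2.1.choose (choose_even x o)

theorem even_period_of (o : OC x) {a : S} (ho : o.1 = orbit (Subgroup.zpowers x) a) :
    Even (period x a) := by
  have he := o.2.2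
  rwa [ho, card_orbit] at he

theorem Phi_inl (o : OA x) {p : S × S} (hp : p.1 ≠ p.2)
    (ho : o.1 = orbit (Subgroup.zpowers x) p) :
    Phi x (.inl o) = toBpair x p hp := by
  show toBpair x o.2.choose o.2.choose_spec.1 = toBpair x p hp
  exact toBpair_eq x o.2.choose_spec.1 hp (by rw [← o.2.choose_spec.2]; exact ho)

theorem Phi_inr (o : OC x) {a : S} (ho : o.1 = orbit (Subgroup.zpowers x) a)
    (ha : Even (period x a)) :
    Phi x (.inr o) = toBpt x a ha := by
  show toBpt x o.2.1.choose (choose_even x o) = toBpt x a ha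
  exact toBpt_eq x _ ha (by rw [← o.2.1.choose_spec]; exact ho)

/-- If a pair orbit of the special "half-period" form maps onto `{a, c}`, then `(a, c)` is
flippable and `a` lies in the point orbit of `a'`. -/
theorem flip_of_half {a' a c : S} (he : Even (period x a')) {j : ℤ}
    (h : x ^ j • ({a', x ^ (period x a' / 2) • a'} : Finset S) = {a, c}) :
    (∃ k : ℤ, x ^ k • a = c ∧ x ^ k • c = a) ∧ a ∈ orbit (Subgroup.zpowers x) a' := by
  set m := period x a' / 2 with hm
  obtain ⟨hne, hback⟩ := flip_mk x he
  rw [smul_pair] at h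
  have hcomm : ∀ b : S, x ^ ((m : ℕ) : ℤ) • (x ^ j • b) = x ^ j • (x ^ m • b) := by
    intro b
    rw [zpow_smul_comm, zpow_natCast]
  have hu : x ^ ((m : ℕ) : ℤ) • (x ^ j • a') = x ^ j • (x ^ m • a') := hcomm a'
  have hv : x ^ ((m : ℕ) : ℤ) • (x ^ j • (x ^ m • a')) = x ^ j • a' := by
    rw [hcomm, hback]
  rcases finset_pair_eq h with ⟨h1, h2⟩ | ⟨h1, h2⟩
  · refine ⟨⟨(m : ℤ), ?_, ?_⟩, ?_⟩
    · rw [← h1, ← h2, hu]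
    · rw [← h1, ← h2, hv]
    · rw [← h1]; exact (mem_orbit_zpow_iff x a' _).mpr ⟨j, rfl⟩
  · refine ⟨⟨(m : ℤ), ?_, ?_⟩, ?_⟩
    · rw [← h1, ← h2, hv]
    · rw [← h1, ← h2, hu]
    · rw [← h2]
      exact (mem_orbit_zpow_iff x a' _).mpr ⟨j + (m : ℤ), by rw [zpow_add, mul_smul, zpow_natCast]⟩

theorem fiber_card (b : OB x) :
    Nat.card {y : (OA x) ⊕ (OC x) // Phi x y = b} = 2 := by
  obtain ⟨s, hs2, hsorb⟩ := b.2
  obtain ⟨a, c, hac, rfl⟩ := Finset.card_eq_two.mp hs2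
  rw [Nat.card_eq_two_iff]
  let oac : OA x := ⟨orbit (Subgroup.zpowers x) ((a, c) : S × S), (a, c), hac, rfl⟩
  by_cases hflip : ∃ k : ℤ, x ^ k • a = c ∧ x ^ k • c = a
  · -- flippable case : elements are inl (orbit (a,c)) and inr (orbit a)
    obtain ⟨k, hk1, hk2⟩ := hflip
    have h2k : x ^ (2 * k) • a = a := by rw [two_mul, zpow_add, mul_smul, hk1, hk2]
    have h1k : x ^ k • a ≠ a := by rw [hk1]; exact Ne.symm hac
    obtain ⟨heven, hhalf⟩ := flip_char x h2k h1k
    have hc : x ^ (period x a / 2) • a = c := by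
      rw [← zpow_natCast x (period x a / 2), hhalf, hk1]
    have hCprop : (∃ a' : S,
          (orbit (Subgroup.zpowers x) a : Set S) = orbit (Subgroup.zpowers x) a')
        ∧ Even (Nat.card (orbit (Subgroup.zpowers x) a : Set S)) :=
      ⟨⟨a, rfl⟩, by rw [card_orbit]; exact heven⟩
    have hPhi1 : Phi x (.inl oac) = b := by
      rw [Phi_inl x oac (p := ((a, c) : S × S)) hac rfl]
      exact Subtype.ext (show orbit _ ({a, c} : Finset S) = ↑b by rw [hsorb])
    have hPhi2 : Phi x (.inr ⟨orbit (Subgroup.zpowers x) a, hCprop⟩) = b := by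
      rw [Phi_inr x _ rfl heven]
      refine Subtype.ext ?_
      show orbit _ _ = _
      rw [hc, hsorb]
    refine ⟨⟨.inl oac, hPhi1⟩, ⟨.inr ⟨orbit (Subgroup.zpowers x) a, hCprop⟩, hPhi2⟩,
      by simp, ?_⟩
    rw [Set.eq_univ_iff_forall]
    rintro ⟨y, hy⟩
    match y with
    | .inl o =>
      obtain ⟨p, hp, hop⟩ : ∃ p : S × S, p.1 ≠ p.2 ∧ o.1 = orbit (Subgroup.zpowers x) p :=
        o.2
      rw [Phi_inl x o hp hop] at hy
      have horb : orbit (Subgroup.zpowers x) ({p.1, p.2} : Finset S)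
          = orbit (Subgroup.zpowers x) ({a, c} : Finset S) := by
        have := congrArg Subtype.val hy
        simpa [toBpair, hsorb] using this
      obtain ⟨j, hj⟩ := (mem_orbit_zpow_iff x _ _).mp (orbit_eq_iff.mp horb)
      rw [smul_pair] at hj
      have hmem : o = oac := by
        apply Subtype.ext
        show o.1 = orbit (Subgroup.zpowers x) ((a, c) : S × S)
        rw [hop]
        rcases finset_pair_eq hj with ⟨h1, h2⟩ | ⟨h1, h2⟩
        · rw [show p = x ^ j • ((a, c) : S × S) from Prod.ext h1.symm h2.symm, orbit_zpow_smul]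
        · rw [show p = x ^ j • ((c, a) : S × S) from Prod.ext h2.symm h1.symm, orbit_zpow_smul,
            show ((a, c) : S × S) = x ^ k • ((c, a) : S × S) from Prod.ext hk2.symm hk1.symm,
            orbit_zpow_smul]
      apply Set.mem_insert_iff.mpr
      left
      exact Subtype.ext (congrArg Sum.inl hmem)
    | .inr o =>
      obtain ⟨a', hoa'⟩ : ∃ a' : S, o.1 = orbit (Subgroup.zpowers x) a' := o.2.1
      have he' : Even (period x a') := even_period_of x o hoa'
      rw [Phi_inr x o hoa' he'] at hy
      have horb : orbit (Subgroup.zpowers x)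
            ({a', x ^ (period x a' / 2) • a'} : Finset S)
          = orbit (Subgroup.zpowers x) ({a, c} : Finset S) := by
        have := congrArg Subtype.val hy
        simpa [toBpt, hsorb] using this
      obtain ⟨j, hj⟩ := (mem_orbit_zpow_iff x _ _).mp (orbit_eq_iff.mp horb.symm)
      have hmemo : a ∈ orbit (Subgroup.zpowers x) a' := (flip_of_half x he' hj).2
      have : o.1 = orbit (Subgroup.zpowers x) a := by
        rw [hoa', (orbit_eq_iff.mpr hmemo)]
      apply Set.mem_insert_iff.mpr
      right
      apply Set.mem_singleton_iff.mpr
      exact Subtype.ext (congrArg Sum.inr (Subtype.ext this))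
  · -- non-flippable : elements are inl (orbit (a,c)) and inl (orbit (c,a))
    let oca : OA x := ⟨orbit (Subgroup.zpowers x) ((c, a) : S × S), (c, a), Ne.symm hac, rfl⟩
    have hPhi1 : Phi x (.inl oac) = b := by
      rw [Phi_inl x oac (p := ((a, c) : S × S)) hac rfl]
      exact Subtype.ext (show orbit _ ({a, c} : Finset S) = ↑b by rw [hsorb])
    have hPhi2 : Phi x (.inl oca) = b := by
      rw [Phi_inl x oca (p := ((c, a) : S × S)) (Ne.symm hac) rfl]
      apply Subtype.ext
      show orbit _ ({c, a} : Finset S) = ↑b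
      rw [hsorb, Finset.pair_comm]
    have hne : oac ≠ oca := by
      intro h
      have h' : orbit (Subgroup.zpowers x) ((a, c) : S × S)
          = orbit (Subgroup.zpowers x) ((c, a) : S × S) := congrArg Subtype.val h
      have hmem : ((c, a) : S × S) ∈ orbit (Subgroup.zpowers x) ((a, c) : S × S) := by
        rw [h']; exact mem_orbit_self _
      obtain ⟨k, hk⟩ := (mem_orbit_zpow_iff x _ _).mp hmem
      exact hflip ⟨k, congrArg Prod.fst hk, congrArg Prod.snd hk⟩
    refine ⟨⟨.inl oac, hPhi1⟩, ⟨.inl oca, hPhi2⟩,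
      fun h => hne (Sum.inl_injective (congrArg Subtype.val h)), ?_⟩
    rw [Set.eq_univ_iff_forall]
    rintro ⟨y, hy⟩
    match y with
    | .inl o =>
      obtain ⟨p, hp, hop⟩ : ∃ p : S × S, p.1 ≠ p.2 ∧ o.1 = orbit (Subgroup.zpowers x) p :=
        o.2
      rw [Phi_inl x o hp hop] at hy
      have horb : orbit (Subgroup.zpowers x) ({p.1, p.2} : Finset S)
          = orbit (Subgroup.zpowers x) ({a, c} : Finset S) := by
        have := congrArg Subtype.val hy
        simpa [toBpair, hsorb] using this
      obtain ⟨j, hj⟩ := (mem_orbit_zpow_iff x _ _).mp (orbit_eq_iff.mp horb)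
      rw [smul_pair] at hj
      rcases finset_pair_eq hj with ⟨h1, h2⟩ | ⟨h1, h2⟩
      · have hpe : p = x ^ j • ((a, c) : S × S) := Prod.ext h1.symm h2.symm
        apply Set.mem_insert_iff.mpr
        left
        refine Subtype.ext (congrArg Sum.inl (Subtype.ext ?_))
        show o.1 = orbit (Subgroup.zpowers x) ((a, c) : S × S)
        rw [hop, hpe, orbit_zpow_smul]
      · have hpe : p = x ^ j • ((c, a) : S × S) := Prod.ext h2.symm h1.symm
        apply Set.mem_insert_iff.mpr
        right
        apply Set.mem_singleton_iff.mpr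
        refine Subtype.ext (congrArg Sum.inl (Subtype.ext ?_))
        show o.1 = orbit (Subgroup.zpowers x) ((c, a) : S × S)
        rw [hop, hpe, orbit_zpow_smul]
    | .inr o =>
      exfalso
      obtain ⟨a', hoa'⟩ : ∃ a' : S, o.1 = orbit (Subgroup.zpowers x) a' := o.2.1
      have he' : Even (period x a') := even_period_of x o hoa'
      rw [Phi_inr x o hoa' he'] at hy
      have horb : orbit (Subgroup.zpowers x)
            ({a', x ^ (period x a' / 2) • a'} : Finset S)
          = orbit (Subgroup.zpowers x) ({a, c} : Finset S) := by
        have := congrArg Subtype.val hy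
        simpa [toBpt, hsorb] using this
      obtain ⟨j, hj⟩ := (mem_orbit_zpow_iff x _ _).mp (orbit_eq_iff.mp horb.symm)
      exact hflip (flip_of_half x he' hj).1

theorem key_count :
    Nat.card (OA x) + Nat.card (OC x) = 2 * Nat.card (OB x) := by
  classical
  haveI fB : Fintype (OB x) := Fintype.ofFinite _
  haveI : ∀ b : OB x, Fintype {y : (OA x) ⊕ (OC x) // Phi x y = b} :=
    fun b => Fintype.ofFinite _
  have h1 : Nat.card ((OA x) ⊕ (OC x))
      = Nat.card (Σ b : OB x, {y : (OA x) ⊕ (OC x) // Phi x y = b}) :=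
    Nat.card_congr (Equiv.sigmaFiberEquiv (Phi x)).symm
  have h3 : Nat.card (Σ b : OB x, {y : (OA x) ⊕ (OC x) // Phi x y = b})
      = ∑ b : OB x, Nat.card {y : (OA x) ⊕ (OC x) // Phi x y = b} := by
    rw [Nat.card_eq_fintype_card, Fintype.card_sigma]
    exact Finset.sum_congr rfl fun b _ => (Nat.card_eq_fintype_card).symm
  rw [Nat.card_sum, h3] at h1
  simp only [fiber_card x] at h1
  rw [Finset.sum_const, smul_eq_mul, Finset.card_univ] at h1
  rw [h1, Nat.card_eq_fintype_card]
  exact mul_comm _ 2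

end StmtAux

/-- The number of orbits of ⟨x⟩ on ordered pairs of distinct elements equals twice the
number of orbits on 2-element subsets minus the number of even-cardinality point orbits. -/
theorem stmt1 {S : Type*} [Fintype S] [DecidableEq S] (x : Equiv.Perm S) :
    (Nat.card {o : Set (S × S) //
        ∃ p : S × S, p.1 ≠ p.2 ∧ o = MulAction.orbit (Subgroup.zpowers x) p} : ℤ)
      = 2 * Nat.card {o : Set (Finset S) //
            ∃ s : Finset S, s.card = 2 ∧ o = MulAction.orbit (Subgroup.zpowers x) s}
        - Nat.card {o : Set S //
            (∃ a : S, o = MulAction.orbit (Subgroup.zpowers x) a) ∧ Even (Nat.card o)} := by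
  have key : Nat.card {o : Set (S × S) //
        ∃ p : S × S, p.1 ≠ p.2 ∧ o = MulAction.orbit (Subgroup.zpowers x) p}
      + Nat.card {o : Set S //
          (∃ a : S, o = MulAction.orbit (Subgroup.zpowers x) a) ∧ Even (Nat.card o)}
      = 2 * Nat.card {o : Set (Finset S) //
          ∃ s : Finset S, s.card = 2 ∧ o = MulAction.orbit (Subgroup.zpowers x) s} :=
    StmtAux.key_count x
  omega
end

section
/- Let 1 ≤ r_1 ≤ r_2 ≤ … ≤ r_u ≤ ℓ be integers whose sum is ℓ. If Σ_{1≤i,j≤u} (r_i − gcd(r_i, r_j)) ≤ ℓ/(2u), then r_1 = r_2 = … = r_u = ℓ/u. -/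
/-- If Σ_{i,j} (r_i − gcd(r_i,r_j)) ≤ ℓ/(2u), then all r_i equal ℓ/u. -/
theorem stmt3 (u ℓ : ℕ) (hu : 0 < u) (r : Fin u → ℕ) (hmono : Monotone r)
    (h1 : ∀ i, 1 ≤ r i) (hℓ : ∀ i, r i ≤ ℓ) (hsum : ∑ i, r i = ℓ)
    (h : ((∑ i : Fin u, ∑ j : Fin u, (r i - Nat.gcd (r i) (r j)) : ℕ) : ℚ) ≤ ℓ / (2 * u)) :
    ∀ i, r i = ℓ / u := by
  set S : ℕ := ∑ i : Fin u, ∑ j : Fin u, (r i - Nat.gcd (r i) (r j)) with hS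
  -- the largest index
  have hm : u - 1 < u := Nat.sub_lt hu one_pos
  set m : Fin u := ⟨u - 1, hm⟩ with hmdef
  have hle : ∀ k : Fin u, r k ≤ r m := by
    intro k
    apply hmono
    exact Nat.le_sub_one_of_lt k.isLt
  by_cases hall : ∀ k : Fin u, r k = r m
  · -- all equal, so ℓ = u * r m
    have hℓeq : ℓ = u * r m := by
      rw [← hsum]
      rw [Finset.sum_congr rfl (fun k _ => hall k)]
      simp [mul_comm]
    intro i
    rw [hall i, hℓeq, Nat.mul_div_cancel_left _ hu]
  · -- derive contradiction
    exfalso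
    push_neg at hall
    obtain ⟨i, hi⟩ := hall
    have hilt : r i < r m := lt_of_le_of_ne (hle i) hi
    -- strict sum bound: ℓ < u * r m
    have hℓlt : ℓ < u * r m := by
      rw [← hsum]
      calc ∑ k, r k < ∑ _k : Fin u, r m := by
            apply Finset.sum_lt_sum (fun k _ => hle k)
            exact ⟨i, Finset.mem_univ i, hilt⟩
        _ = u * r m := by simp [mul_comm]
    -- the key term
    set g : ℕ := Nat.gcd (r m) (r i) with hg
    have hgdvd : g ∣ r m := Nat.gcd_dvd_left _ _
    have hglt : g < r m := lt_of_le_of_lt (Nat.le_of_dvd (h1 i) (Nat.gcd_dvd_right _ _)) hilt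
    have h2g : 2 * g ≤ r m := by
      obtain ⟨k, hk⟩ := hgdvd
      have hgpos : 0 < g := Nat.gcd_pos_of_pos_left _ (lt_of_le_of_lt (Nat.zero_le _) hglt)
      have hk2 : 2 ≤ k := by
        by_contra hk2
        push_neg at hk2
        interval_cases k <;> omega
      calc 2 * g ≤ g * k := by nlinarith
        _ = r m := hk.symm
    -- the single term is at least r m - g
    have hterm : r m - g ≤ S := by
      rw [hS]
      calc r m - g ≤ ∑ j : Fin u, (r m - Nat.gcd (r m) (r j)) := by
            exact Finset.single_le_sum (f := fun j => r m - Nat.gcd (r m) (r j))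
              (fun _ _ => Nat.zero_le _) (Finset.mem_univ i)
        _ ≤ ∑ i' : Fin u, ∑ j : Fin u, (r i' - Nat.gcd (r i') (r j)) := by
            exact Finset.single_le_sum
              (f := fun i' => ∑ j : Fin u, (r i' - Nat.gcd (r i') (r j)))
              (fun _ _ => Nat.zero_le _) (Finset.mem_univ m)
    -- so 2 * u * S ≥ u * r m > ℓ
    have hkey : ℓ < S * (2 * u) := by
      have : r m ≤ 2 * (r m - g) := by omega
      calc ℓ < u * r m := hℓlt
        _ ≤ u * (2 * (r m - g)) := Nat.mul_le_mul_left _ this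
        _ ≤ u * (2 * S) := Nat.mul_le_mul_left _ (Nat.mul_le_mul_left _ hterm)
        _ = S * (2 * u) := by ring
    -- convert h to ℕ
    have hupos : (0 : ℚ) < 2 * u := by positivity
    rw [le_div_iff₀ hupos] at h
    have h' : (S * (2 * u) : ℕ) ≤ ℓ := by exact_mod_cast h
    omega
end

section
/- Let α be a positive integer and ℓ an integer with ℓ ≥ 156(α+1)(4α+5). Let E be a multiset of positive integers whose sum is ℓ, and suppose Σ_{r_1, r_2 ∈ E} (r_1 − gcd(r_1, r_2)) < 2(α+1)ℓ, where the sum is over all ordered pairs of elements of E (with multiplicity). Then either (1) there is some integer k with 1 ≤ k ≤ 6 such that the multiplicity of k in E is at least ℓ/k − 2(α+1)(k+1), or (2) for every integer k with 1 ≤ k ≤ 6, the multiplicity of k in E is at most 4(α+1). -/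
private lemma two_mul_le_of_dvd {a b : ℕ} (h : a ∣ b) (hne : a ≠ b) (hb : 0 < b) :
    2 * a ≤ b := by
  obtain ⟨c, rfl⟩ := h
  rcases Nat.lt_or_ge c 2 with hc | hc
  · interval_cases c <;> omega
  · calc 2 * a = a * 2 := by ring
      _ ≤ a * c := Nat.mul_le_mul_left a hc

private lemma pointwise_bound {e k : ℕ} (he : 0 < e) (hk : 0 < k) (hne : e ≠ k) :
    e ≤ 2 * ((e - Nat.gcd e k) + (k - Nat.gcd k e)) := by
  have hcomm : Nat.gcd k e = Nat.gcd e k := Nat.gcd_comm k e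
  set g := Nat.gcd e k with hg
  have hde : g ∣ e := Nat.gcd_dvd_left e k
  have hdk : g ∣ k := Nat.gcd_dvd_right e k
  have hle : g ≤ e := Nat.le_of_dvd he hde
  have hlk : g ≤ k := Nat.le_of_dvd hk hdk
  rw [hcomm]
  by_cases hge : g = e
  · have h2 : 2 * e ≤ k := two_mul_le_of_dvd (hge ▸ hdk) (by omega) hk
    omega
  · have h2 : 2 * g ≤ e := two_mul_le_of_dvd hde hge he
    omega

/-- Dichotomy for ramification multisets: either some k ≤ 6 has multiplicity at least
ℓ/k − 2(α+1)(k+1), or every k ≤ 6 has multiplicity at most 4(α+1). -/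
theorem stmt11 (α ℓ : ℕ) (hα : 0 < α) (hℓ : 156 * (α + 1) * (4 * α + 5) ≤ ℓ)
    (E : Multiset ℕ) (hpos : ∀ r ∈ E, 0 < r) (hsum : E.sum = ℓ)
    (hband : (((E.map fun r₁ => (E.map fun r₂ => r₁ - Nat.gcd r₁ r₂).sum).sum : ℕ) : ℚ)
        < 2 * (α + 1) * ℓ) :
    (∃ k : ℕ, 1 ≤ k ∧ k ≤ 6 ∧ (ℓ : ℚ) / k - 2 * (α + 1) * (k + 1) ≤ (E.count k : ℚ)) ∨
    (∀ k : ℕ, 1 ≤ k → k ≤ 6 → E.count k ≤ 4 * (α + 1)) := by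
  by_cases hall : ∀ k : ℕ, 1 ≤ k → k ≤ 6 → E.count k ≤ 4 * (α + 1)
  · exact Or.inr hall
  left
  push_neg at hall
  obtain ⟨k, hk1, hk6, hm⟩ := hall
  refine ⟨k, hk1, hk6, ?_⟩
  set D : ℕ := (E.map fun r₁ => (E.map fun r₂ => r₁ - Nat.gcd r₁ r₂).sum).sum with hD
  set m : ℕ := E.count k with hmdef
  set R : Multiset ℕ := E.filter (fun e => ¬ e = k) with hRdef
  have hsplit : Multiset.replicate m k + R = E := by
    rw [hRdef, hmdef, ← Multiset.filter_eq' E k]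
    exact Multiset.filter_add_not _ _
  have key : ∀ f : ℕ → ℕ, (E.map f).sum = m * f k + (R.map f).sum := by
    intro f
    have h1 : (Multiset.replicate m k).map f + R.map f = E.map f := by
      rw [← Multiset.map_add, hsplit]
    rw [← h1, Multiset.sum_add, Multiset.map_replicate, Multiset.sum_replicate, smul_eq_mul]
  have hRE : ∀ e ∈ R, e ∈ E := fun e he => Multiset.mem_of_mem_filter he
  have hRne : ∀ e ∈ R, e ≠ k := by
    intro e he
    have := Multiset.of_mem_filter he
    simpa using this
  set s : ℕ := R.sum with hs
  have hks : k * m + s = ℓ := by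
    have h := key (fun e => e)
    simp only [Multiset.map_id'] at h
    rw [hsum] at h
    rw [Nat.mul_comm k m]
    omega
  -- decompose D
  set F : ℕ → ℕ := fun r₁ => (E.map fun r₂ => r₁ - Nat.gcd r₁ r₂).sum with hF
  have hDdec : D = m * F k + (R.map F).sum := key F
  have hFk : F k = (R.map fun e => k - Nat.gcd k e).sum := by
    have h := key (fun r₂ => k - Nat.gcd k r₂)
    show (E.map fun r₂ => k - Nat.gcd k r₂).sum = _
    simp only [Nat.gcd_self, Nat.sub_self, Nat.mul_zero, Nat.zero_add] at h
    exact h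
  have hFr : ∀ r₁ ∈ R, m * (r₁ - Nat.gcd r₁ k) ≤ F r₁ := by
    intro r₁ _
    have h := key (fun r₂ => r₁ - Nat.gcd r₁ r₂)
    show m * (r₁ - Nat.gcd r₁ k) ≤ (E.map fun r₂ => r₁ - Nat.gcd r₁ r₂).sum
    rw [h]
    exact Nat.le_add_right _ _
  have hsumF : (R.map fun e => m * (e - Nat.gcd e k)).sum ≤ (R.map F).sum :=
    Multiset.sum_map_le_sum_map _ _ hFr
  have hmulleft : (R.map fun e => m * (e - Nat.gcd e k)).sum
      = m * (R.map fun e => (e - Nat.gcd e k)).sum := Multiset.sum_map_mul_left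
  have hDlb : m * ((R.map fun e => (e - Nat.gcd e k)).sum
      + (R.map fun e => k - Nat.gcd k e).sum) ≤ D := by
    rw [hDdec, hFk, Nat.mul_add]
    have h1 : m * (R.map fun e => (e - Nat.gcd e k)).sum ≤ (R.map F).sum :=
      hmulleft ▸ hsumF
    omega
  -- pointwise bound summed over R : s ≤ 2 * (Σ g1 + Σ g2)
  have hptsum : s ≤ 2 * ((R.map fun e => (e - Nat.gcd e k)).sum
      + (R.map fun e => k - Nat.gcd k e).sum) := by
    have h1 : (R.map fun e => e).sum ≤
        (R.map fun e => 2 * ((e - Nat.gcd e k) + (k - Nat.gcd k e))).sum := by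
      refine Multiset.sum_map_le_sum_map _ _ ?_
      intro e he
      exact pointwise_bound (hpos e (hRE e he)) (by omega) (hRne e he)
    have h2 : (R.map fun e => 2 * ((e - Nat.gcd e k) + (k - Nat.gcd k e))).sum
        = 2 * ((R.map fun e => (e - Nat.gcd e k)).sum
          + (R.map fun e => k - Nat.gcd k e).sum) := by
      rw [← Multiset.sum_map_add]
      exact Multiset.sum_map_mul_left
    rw [Multiset.map_id'] at h1
    omega
  -- master inequality
  have hDnat : D < 2 * (α + 1) * ℓ := by exact_mod_cast hband
  have hmaster : m * s < 4 * (α + 1) * ℓ := by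
    have h1 : m * s ≤ 2 * D := by
      calc m * s ≤ m * (2 * ((R.map fun e => (e - Nat.gcd e k)).sum
          + (R.map fun e => k - Nat.gcd k e).sum)) := Nat.mul_le_mul_left m hptsum
        _ = 2 * (m * ((R.map fun e => (e - Nat.gcd e k)).sum
          + (R.map fun e => k - Nat.gcd k e).sum)) := by ring
        _ ≤ 2 * D := Nat.mul_le_mul_left 2 hDlb
    calc m * s ≤ 2 * D := h1
      _ < 2 * (2 * (α + 1) * ℓ) := by omega
      _ = 4 * (α + 1) * ℓ := by ring
  -- bootstrap
  have hm' : 4 * α + 5 ≤ m := by omega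
  have hb1 : ℓ < (4 * α + 5) * (k * m) := by
    have h1 : (4 * α + 5) * s ≤ m * s := Nat.mul_le_mul_right s hm'
    have h2 : (4 * α + 5) * s < 4 * (α + 1) * ℓ := lt_of_le_of_lt h1 hmaster
    have h3 : (4 * α + 5) * ℓ = (4 * α + 5) * (k * m) + (4 * α + 5) * s := by
      rw [← hks]; ring
    linarith [h2, h3]
  have hb2 : 26 * (α + 1) < m := by
    have c2 : k * m ≤ 6 * m := Nat.mul_le_mul_right m hk6
    have c3 : ℓ < (4 * α + 5) * (6 * m) :=
      lt_of_lt_of_le hb1 (Nat.mul_le_mul_left _ c2)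
    have c4 : (6 * (4 * α + 5)) * (26 * (α + 1)) < (6 * (4 * α + 5)) * m := by
      linarith [hℓ, c3]
    exact Nat.lt_of_mul_lt_mul_left c4
  have hb3 : 13 * s < 2 * ℓ := by
    have e1 : (26 * (α + 1)) * s ≤ m * s := Nat.mul_le_mul_right s (le_of_lt hb2)
    have e2 : (α + 1) * (26 * s) < (α + 1) * (4 * ℓ) := by linarith [e1, hmaster]
    have e3 : 26 * s < 4 * ℓ := Nat.lt_of_mul_lt_mul_left e2
    omega
  have hb4 : 11 * ℓ < 13 * (k * m) := by linarith [hks, hb3]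
  have hb5 : 11 * s < 52 * (α + 1) * k := by
    have f1 : (11 * ℓ) * s ≤ (13 * (k * m)) * s := Nat.mul_le_mul_right s (le_of_lt hb4)
    have f3 : (13 * k) * (m * s) < (13 * k) * (4 * (α + 1) * ℓ) :=
      mul_lt_mul_of_pos_left hmaster (by omega)
    have g1 : (11 * s) * ℓ < (52 * (α + 1) * k) * ℓ := by linarith [f1, f3]
    exact lt_of_mul_lt_mul_right g1 (Nat.zero_le ℓ)
  have hfinal : ℓ ≤ k * m + 2 * (α + 1) * k * (k + 1) := by
    rcases Nat.lt_or_ge k 2 with hk2 | hk2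
    · -- k = 1 : refined argument
      have hk1' : k = 1 := by omega
      subst hk1'
      set T : ℕ := (R.map fun e => e - 1).sum with hT
      have hDT : m * T ≤ D := by
        have h0 : (R.map fun e => e - Nat.gcd e 1) = (R.map fun e => e - 1) := by
          apply Multiset.map_congr rfl
          intro e _
          rw [Nat.gcd_one_right]
        have h1 : m * T ≤ m * ((R.map fun e => (e - Nat.gcd e 1)).sum
            + (R.map fun e => 1 - Nat.gcd 1 e).sum) := by
          rw [h0, ← hT]
          exact Nat.mul_le_mul_left m (Nat.le_add_right _ _)
        exact le_trans h1 hDlb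
      have h2T : s ≤ 2 * T := by
        have h1 : (R.map fun e => e).sum ≤ (R.map fun e => 2 * (e - 1)).sum := by
          refine Multiset.sum_map_le_sum_map _ _ ?_
          intro e he
          have h2 := hpos e (hRE e he)
          have h3 := hRne e he
          omega
        have h2 : (R.map fun e => 2 * (e - 1)).sum = 2 * T := Multiset.sum_map_mul_left
        rw [Multiset.map_id'] at h1
        omega
      have hT2 : T ≤ 2 * (α + 1) := by
        by_contra hcon
        push_neg at hcon
        have h1 : m * (2 * α + 3) ≤ m * T := Nat.mul_le_mul_left m (by omega)
        have h2 : m * T < 2 * (α + 1) * ℓ := lt_of_le_of_lt hDT hDnat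
        have hx : 2 * (α + 1) * ℓ = 2 * (α + 1) * m + 2 * (α + 1) * s := by
          rw [← hks]; ring
        have hm_lt : m < (2 * α + 2) * s := by linarith [h1, h2, hx]
        have q1 : 11 * m < (2 * α + 2) * (52 * (α + 1)) := by
          have q0 : (2 * α + 2) * (11 * s) < (2 * α + 2) * (52 * (α + 1)) := by
            have := hb5
            simp only [Nat.mul_one] at this
            exact mul_lt_mul_of_pos_left this (by omega)
          linarith [hm_lt, q0]
        have q2 : 11 * ℓ < 13 * m := by
          have := hb4
          simp only [Nat.one_mul] at this
          omega
        linarith [q1, q2, hℓ]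
      omega
    · -- k ≥ 2
      have g1 : 52 * (α + 1) * k ≤ 22 * ((α + 1) * k) * 3 := by linarith
      have g1' : 22 * ((α + 1) * k) * 3 ≤ 22 * ((α + 1) * k) * (k + 1) :=
        Nat.mul_le_mul_left _ (by omega)
      have g2 : 11 * s < 11 * (2 * (α + 1) * k * (k + 1)) := by linarith [hb5, g1, g1']
      have g3 : s < 2 * (α + 1) * k * (k + 1) := Nat.lt_of_mul_lt_mul_left g2
      linarith [hks, g3]
  -- conclude in ℚ
  have hk0 : (0 : ℚ) < (k : ℚ) := by exact_mod_cast hk1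
  rw [sub_le_iff_le_add, div_le_iff₀ hk0]
  have hc : (ℓ : ℚ) ≤ (k : ℚ) * m + 2 * ((α : ℚ) + 1) * k * (k + 1) := by
    exact_mod_cast hfinal
  linarith [hc]
end

section
/- Let ℓ ≥ 8 be an even integer, and let b, c ∈ Sym({1,…,ℓ}) be permutations such that b has cycle type [4, 2^{(ℓ−4)/2}] (one 4-cycle and (ℓ−4)/2 transpositions), c has cycle type [2^{ℓ/2}] (a fixed-point-free involution), and the product bc is an ℓ-cycle. Then the subgroup ⟨b, c⟩ of Sym({1,…,ℓ}) is imprimitive: it preserves a nontrivial partition of {1,…,ℓ} into blocks of size 2. -/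
private def E {ℓ : ℕ} (π : ZMod ℓ → ZMod ℓ) (x : ZMod ℓ) : ZMod ℓ := x + π x

private lemma key {ℓ : ℕ} [NeZero ℓ] (hℓ : 8 ≤ ℓ)
    (π : ZMod ℓ → ZMod ℓ)
    (hinv : ∀ x, π (π x) = x)
    (hnf : ∀ x, π x ≠ x)
    (hnb : ∀ x, π (x + 1) ≠ x)
    (hJ : (Finset.univ.filter (fun x : ZMod ℓ => E π (x+1) ≠ E π x)).card ≤ 4) :
    ∀ x : ZMod ℓ, π (x + ((ℓ/2 : ℕ) : ZMod ℓ)) = π x + ((ℓ/2 : ℕ) : ZMod ℓ) := by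
  have hℓ0 : ((ℓ:ℕ) : ZMod ℓ) = 0 := ZMod.natCast_self ℓ
  have natinj : ∀ u w : ℕ, u < ℓ → w < ℓ → ((u:ℕ) : ZMod ℓ) = (w : ZMod ℓ) → u = w := by
    intro u w hu hw h
    have := (ZMod.natCast_eq_natCast_iff u w ℓ).mp h
    rwa [Nat.ModEq, Nat.mod_eq_of_lt hu, Nat.mod_eq_of_lt hw] at this
  have hπe : ∀ x, π x = E π x - x := by intro x; simp [E]
  have heπ : ∀ x, E π (π x) = E π x := by
    intro x; show π x + π (π x) = x + π x; rw [hinv x]; ring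
  have L2 : ∀ a, E π a ≠ E π (a - 1) → E π (π a + 1) ≠ E π (π a) := by
    intro a h hcon
    apply h
    have h1 : π (π a + 1) = a - 1 := by
      have h2 := hπe (π a + 1)
      rw [hcon, heπ a] at h2
      rw [h2]; show E π a - (π a + 1) = a - 1
      rw [show E π a = a + π a from rfl]; ring
    have h2 : π (a - 1) = π a + 1 := by rw [← h1, hinv]
    show a + π a = (a - 1) + π (a-1)
    rw [h2]; ring
  have L3 : ∀ d, E π (d + 1) ≠ E π d → E π (π d) ≠ E π (π d - 1) := by
    intro d h hcon
    apply h
    have h1 : π (π d - 1) = d + 1 := by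
      have h2 := hπe (π d - 1)
      rw [← hcon, heπ d] at h2
      rw [h2]; show E π d - (π d - 1) = d + 1
      rw [show E π d = d + π d from rfl]; ring
    have h2 : π (d + 1) = π d - 1 := by rw [← h1, hinv]
    show (d+1) + π (d+1) = d + π d
    rw [h2]; ring
  have LR : ∀ (a : ZMod ℓ) (n : ℕ),
      (∀ j : ℕ, j ≤ n → E π (a + (j:ZMod ℓ)) = E π a) → π a = a + (n : ZMod ℓ) → False := by
    intro a n hcst hrefl
    have hj : ∀ j : ℕ, j ≤ n → π (a + (j : ZMod ℓ)) = a + (((n - j : ℕ)) : ZMod ℓ) := by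
      intro j hjn
      have h1 := hπe (a + (j : ZMod ℓ))
      rw [hcst j hjn] at h1
      rw [h1, show E π a = a + π a from rfl, hrefl, Nat.cast_sub hjn]; ring
    rcases Nat.even_or_odd n with ⟨k, hk⟩ | ⟨k, hk⟩
    · have h1 := hj k (by omega)
      rw [show n - k = k by omega] at h1
      exact hnf _ h1
    · have h1 := hj (k+1) (by omega)
      rw [show n - (k+1) = k by omega] at h1
      have h2 : π (a + (k:ZMod ℓ) + 1) = a + (k:ZMod ℓ) := by
        rw [show a + (k:ZMod ℓ) + 1 = a + ((k+1 : ℕ):ZMod ℓ) by push_cast; ring]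
        exact h1
      exact hnb _ h2
  -- get a jump point
  by_cases hD : ∃ d, E π (d + 1) ≠ E π d
  swap
  · push_neg at hD
    have hcst : ∀ (a : ZMod ℓ) (j : ℕ), E π (a + (j:ZMod ℓ)) = E π a := by
      intro a j
      induction j with
      | zero => norm_num
      | succ i ih =>
        rw [show a + ((i+1 : ℕ):ZMod ℓ) = (a + (i:ZMod ℓ)) + 1 by push_cast; ring, hD, ih]
    exfalso
    refine LR 0 ((π 0).val) (fun j _ => hcst 0 j) ?_
    rw [ZMod.natCast_rightInverse (π 0), zero_add]
  obtain ⟨d₀, hd₀⟩ := hD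
  have hex : ∀ a : ZMod ℓ, ∃ k : ℕ, E π (a + (k:ZMod ℓ) + 1) ≠ E π (a + (k:ZMod ℓ)) := by
    intro a
    refine ⟨(d₀ - a).val, ?_⟩
    have h1 : a + (((d₀ - a).val : ℕ) : ZMod ℓ) = d₀ := by
      rw [ZMod.natCast_rightInverse (d₀ - a)]; ring
    rw [h1]; exact hd₀
  set nxt : ZMod ℓ → ℕ := fun a => Nat.find (hex a) with hnxtdef
  have hnxt_spec : ∀ a, E π (a + ((nxt a : ℕ):ZMod ℓ) + 1) ≠ E π (a + ((nxt a : ℕ):ZMod ℓ)) :=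
    fun a => Nat.find_spec (hex a)
  have hnxt_min : ∀ (a : ZMod ℓ) (k : ℕ), k < nxt a →
      E π (a + (k:ZMod ℓ) + 1) = E π (a + (k:ZMod ℓ)) := by
    intro a k hk
    have := Nat.find_min (hex a) hk
    exact not_not.mp this
  have hconst : ∀ (a : ZMod ℓ) (j : ℕ), j ≤ nxt a → E π (a + (j:ZMod ℓ)) = E π a := by
    intro a j hj
    induction j with
    | zero => norm_num
    | succ i ih =>
      rw [show a + ((i+1 : ℕ):ZMod ℓ) = (a + (i:ZMod ℓ)) + 1 by push_cast; ring,
        hnxt_min a i (by omega), ih (by omega)]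
  have hstop : ∀ (a : ZMod ℓ) (t : ℕ), a + (t : ZMod ℓ) = d₀ → nxt a ≤ t := by
    intro a t h
    apply Nat.find_min'
    rw [h]; exact hd₀
  have hplus1 : ∀ (x : ZMod ℓ) (k : ℕ), x + (k:ZMod ℓ) + 1 = x + ((k+1:ℕ) : ZMod ℓ) := by
    intro x k; push_cast; ring
  have hshift : ∀ (x : ZMod ℓ) (u v : ℕ), x + (u:ZMod ℓ) + (v:ZMod ℓ) = x + ((u+v:ℕ) : ZMod ℓ) := by
    intro x u v; push_cast; ring
  have hne : ∀ u v : ℕ, u < ℓ → v < ℓ → u ≠ v → d₀ + (u:ZMod ℓ) ≠ d₀ + (v:ZMod ℓ) := by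
    intro u v hu hv huv h
    exact huv (natinj u v hu hv (by exact add_left_cancel h))
  have hd₀' : E π (d₀ + ((1:ℕ):ZMod ℓ)) ≠ E π (d₀ + ((0:ℕ):ZMod ℓ)) := by
    push_cast; simpa using hd₀
  have hCgen : ∀ (o j : ℕ), j ≤ nxt (d₀ + (o:ZMod ℓ)) →
      E π (d₀ + ((o+j:ℕ):ZMod ℓ)) = E π (d₀ + ((o:ℕ):ZMod ℓ)) := by
    intro o j hj
    have := hconst (d₀ + ((o:ℕ):ZMod ℓ)) j hj
    rwa [hshift] at this
  have hJgen : ∀ o : ℕ,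
      E π (d₀ + ((o + nxt (d₀ + (o:ZMod ℓ)) + 1 : ℕ):ZMod ℓ)) ≠
      E π (d₀ + ((o + nxt (d₀ + (o:ZMod ℓ)) : ℕ) : ZMod ℓ)) := by
    intro o
    have := hnxt_spec (d₀ + ((o:ℕ):ZMod ℓ))
    rwa [hshift, hplus1] at this
  have hMgen : ∀ o k : ℕ, k < nxt (d₀ + (o:ZMod ℓ)) →
      E π (d₀ + ((o+k+1:ℕ):ZMod ℓ)) = E π (d₀ + ((o+k:ℕ):ZMod ℓ)) := by
    intro o k hk
    have := hnxt_min (d₀ + ((o:ℕ):ZMod ℓ)) k hk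
    rwa [hshift, hplus1] at this
  have hSgen : ∀ o t : ℕ, o + t = ℓ → nxt (d₀ + (o:ZMod ℓ)) ≤ t := by
    intro o t h
    apply hstop
    rw [hshift, h, hℓ0, add_zero]
  set n₁ : ℕ := nxt (d₀ + ((1:ℕ):ZMod ℓ)) with hn1
  -- bound for arc 1
  have hB1 : 1 + n₁ ≤ ℓ - 1 := by
    have h1 : n₁ ≤ ℓ - 1 := by rw [hn1]; exact hSgen 1 (ℓ-1) (by omega)
    rcases Nat.lt_or_ge n₁ (ℓ-1) with h | h
    · omega
    · exfalso
      have h2 : n₁ = ℓ - 1 := by omega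
      have h3 := hCgen 1 (ℓ-1) (by omega)
      rw [show 1 + (ℓ-1) = ℓ by omega, hℓ0, add_zero] at h3
      exact hd₀ (by
        rw [show d₀ + 1 = d₀ + ((1:ℕ):ZMod ℓ) by push_cast; ring]
        exact h3.symm)
  set n₂ : ℕ := nxt (d₀ + ((2+n₁:ℕ):ZMod ℓ)) with hn2
  have hB2' : 2 + n₁ + n₂ ≤ ℓ := by
    have := hSgen (2+n₁) (ℓ-(2+n₁)) (by omega)
    omega
  -- the common start data
  have hstart : E π (d₀ + ((1:ℕ):ZMod ℓ)) ≠ E π ((d₀ + ((1:ℕ):ZMod ℓ)) - 1) := by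
    rw [show (d₀ + ((1:ℕ):ZMod ℓ)) - 1 = d₀ + ((0:ℕ):ZMod ℓ) by push_cast; ring]
    exact hd₀'
  have hπ1J := L2 (d₀ + ((1:ℕ):ZMod ℓ)) hstart
  have hE1 : E π (d₀ + ((1+n₁:ℕ):ZMod ℓ)) = E π (d₀ + ((1:ℕ):ZMod ℓ)) :=
    hCgen 1 n₁ (by omega)
  have hJ1 : E π (d₀ + ((2+n₁:ℕ):ZMod ℓ)) ≠ E π (d₀ + ((1+n₁:ℕ):ZMod ℓ)) := by
    have := hJgen 1
    rw [← hn1, show 1+n₁+1 = 2+n₁ by omega] at this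
    exact this
  -- LR applied to arc 1 : π a₁ ≠ d₁
  have hLR1 : π (d₀ + ((1:ℕ):ZMod ℓ)) ≠ d₀ + ((1+n₁:ℕ):ZMod ℓ) := by
    intro h
    refine LR (d₀ + ((1:ℕ):ZMod ℓ)) n₁ ?_ ?_
    · intro j hj
      have := hCgen 1 j (by omega)
      rwa [← hshift] at this
    · rw [h, ← hshift]
  -- dispose of the case where there are only two arcs
  rcases Nat.eq_or_lt_of_le hB2' with he₂ | hB2''
  · exfalso
    have hcov2 : ∀ x : ZMod ℓ, E π (x+1) ≠ E π x →
        x = d₀ + ((0:ℕ):ZMod ℓ) ∨ x = d₀ + ((1+n₁:ℕ):ZMod ℓ) := by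
      intro x hx
      have hxe : x = d₀ + (((x - d₀).val : ℕ) : ZMod ℓ) := by
        rw [ZMod.natCast_rightInverse (x - d₀)]; ring
      set t := (x - d₀).val with htdef
      have htl : t < ℓ := ZMod.val_lt _
      have hx' : E π (d₀ + ((t+1:ℕ):ZMod ℓ)) ≠ E π (d₀ + ((t:ℕ):ZMod ℓ)) := by
        rw [← hplus1, ← hxe]; exact hx
      by_contra hcon
      push_neg at hcon
      obtain ⟨hc0, hc1⟩ := hcon
      have ht0 : t ≠ 0 := fun h => hc0 (by rw [hxe, h])
      have ht1 : t ≠ 1+n₁ := fun h => hc1 (by rw [hxe, h])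
      have hrange : (1 ≤ t ∧ t < 1+n₁) ∨ (2+n₁ ≤ t ∧ t < ℓ) := by omega
      rcases hrange with ⟨h1,h2⟩ | ⟨h1,h2⟩
      · have := hMgen 1 (t-1) (by omega)
        rw [show 1+(t-1)+1 = t+1 by omega, show 1+(t-1) = t by omega] at this
        exact hx' this
      · have := hMgen (2+n₁) (t-(2+n₁)) (by omega)
        rw [show 2+n₁+(t-(2+n₁))+1 = t+1 by omega,
          show 2+n₁+(t-(2+n₁)) = t by omega] at this
        exact hx' this
    rcases hcov2 _ hπ1J with h | h
    · have h2 := heπ (d₀ + ((1:ℕ):ZMod ℓ))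
      rw [h] at h2
      exact hd₀' h2.symm
    · exact hLR1 h
  -- now 2 + n₁ + n₂ < ℓ ; define arc 3
  have hB2 : 2 + n₁ + n₂ ≤ ℓ - 1 := by omega
  set n₃ : ℕ := nxt (d₀ + ((3+n₁+n₂:ℕ):ZMod ℓ)) with hn3
  have hB3' : 3 + n₁ + n₂ + n₃ ≤ ℓ := by
    have := hSgen (3+n₁+n₂) (ℓ-(3+n₁+n₂)) (by omega)
    omega
  have hE2 : E π (d₀ + ((2+n₁+n₂:ℕ):ZMod ℓ)) = E π (d₀ + ((2+n₁:ℕ):ZMod ℓ)) :=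
    hCgen (2+n₁) n₂ (by omega)
  rcases Nat.eq_or_lt_of_le hB3' with he₃ | hB3''
  · exfalso
    have hcov3 : ∀ x : ZMod ℓ, E π (x+1) ≠ E π x →
        x = d₀ + ((0:ℕ):ZMod ℓ) ∨ x = d₀ + ((1+n₁:ℕ):ZMod ℓ) ∨
        x = d₀ + ((2+n₁+n₂:ℕ):ZMod ℓ) := by
      intro x hx
      have hxe : x = d₀ + (((x - d₀).val : ℕ) : ZMod ℓ) := by
        rw [ZMod.natCast_rightInverse (x - d₀)]; ring
      set t := (x - d₀).val with htdef
      have htl : t < ℓ := ZMod.val_lt _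
      have hx' : E π (d₀ + ((t+1:ℕ):ZMod ℓ)) ≠ E π (d₀ + ((t:ℕ):ZMod ℓ)) := by
        rw [← hplus1, ← hxe]; exact hx
      by_contra hcon
      push_neg at hcon
      obtain ⟨hc0, hc1, hc2⟩ := hcon
      have ht0 : t ≠ 0 := fun h => hc0 (by rw [hxe, h])
      have ht1 : t ≠ 1+n₁ := fun h => hc1 (by rw [hxe, h])
      have ht2 : t ≠ 2+n₁+n₂ := fun h => hc2 (by rw [hxe, h])
      have hrange : (1 ≤ t ∧ t < 1+n₁) ∨ (2+n₁ ≤ t ∧ t < 2+n₁+n₂)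
          ∨ (3+n₁+n₂ ≤ t ∧ t < ℓ) := by omega
      rcases hrange with ⟨h1,h2⟩ | ⟨h1,h2⟩ | ⟨h1,h2⟩
      · have := hMgen 1 (t-1) (by omega)
        rw [show 1+(t-1)+1 = t+1 by omega, show 1+(t-1) = t by omega] at this
        exact hx' this
      · have := hMgen (2+n₁) (t-(2+n₁)) (by omega)
        rw [show 2+n₁+(t-(2+n₁))+1 = t+1 by omega,
          show 2+n₁+(t-(2+n₁)) = t by omega] at this
        exact hx' this
      · have := hMgen (3+n₁+n₂) (t-(3+n₁+n₂)) (by omega)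
        rw [show 3+n₁+n₂+(t-(3+n₁+n₂))+1 = t+1 by omega,
          show 3+n₁+n₂+(t-(3+n₁+n₂)) = t by omega] at this
        exact hx' this
    rcases hcov3 _ hπ1J with h | h | h
    · have h2 := heπ (d₀ + ((1:ℕ):ZMod ℓ))
      rw [h] at h2
      exact hd₀' h2.symm
    · exact hLR1 h
    · have h2 := heπ (d₀ + ((1:ℕ):ZMod ℓ))
      rw [h] at h2
      exact hJ1 ((hE2.symm.trans h2).trans hE1.symm)
  -- now 3 + n₁ + n₂ + n₃ < ℓ ; define arc 4
  have hB3 : 3 + n₁ + n₂ + n₃ ≤ ℓ - 1 := by omega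
  set n₄ : ℕ := nxt (d₀ + ((4+n₁+n₂+n₃:ℕ):ZMod ℓ)) with hn4
  have hB4' : 4 + n₁ + n₂ + n₃ + n₄ ≤ ℓ := by
    have := hSgen (4+n₁+n₂+n₃) (ℓ-(4+n₁+n₂+n₃)) (by omega)
    omega
  have hE3 : E π (d₀ + ((3+n₁+n₂+n₃:ℕ):ZMod ℓ)) = E π (d₀ + ((3+n₁+n₂:ℕ):ZMod ℓ)) :=
    hCgen (3+n₁+n₂) n₃ (by omega)
  have hJ2 : E π (d₀ + ((3+n₁+n₂:ℕ):ZMod ℓ)) ≠ E π (d₀ + ((2+n₁+n₂:ℕ):ZMod ℓ)) := by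
    have := hJgen (2+n₁)
    rw [← hn2, show 2+n₁+n₂+1 = 3+n₁+n₂ by omega] at this
    exact this
  have hJ3 : E π (d₀ + ((4+n₁+n₂+n₃:ℕ):ZMod ℓ)) ≠ E π (d₀ + ((3+n₁+n₂+n₃:ℕ):ZMod ℓ)) := by
    have := hJgen (3+n₁+n₂)
    rw [← hn3, show 3+n₁+n₂+n₃+1 = 4+n₁+n₂+n₃ by omega] at this
    exact this
  rcases Nat.eq_or_lt_of_le hB4' with he₄ | hB4''
  swap
  · -- five distinct jump points : contradiction with hJ
    exfalso
    have hmem : ∀ u : ℕ, E π (d₀ + ((u+1:ℕ):ZMod ℓ)) ≠ E π (d₀ + ((u:ℕ):ZMod ℓ)) →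
        d₀ + ((u:ℕ):ZMod ℓ) ∈
          Finset.univ.filter (fun x : ZMod ℓ => E π (x+1) ≠ E π x) := by
      intro u h
      simp only [Finset.mem_filter, Finset.mem_univ, true_and]
      rwa [hplus1]
    have hJ4 : E π (d₀ + ((4+n₁+n₂+n₃+n₄+1:ℕ):ZMod ℓ)) ≠
        E π (d₀ + ((4+n₁+n₂+n₃+n₄:ℕ):ZMod ℓ)) := by
      have := hJgen (4+n₁+n₂+n₃)
      rw [← hn4] at this
      exact this
    have hJ0' : E π (d₀ + ((0+1:ℕ):ZMod ℓ)) ≠ E π (d₀ + ((0:ℕ):ZMod ℓ)) := by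
      rw [show (0+1 : ℕ) = 1 by omega]; exact hd₀'
    have hJ1' : E π (d₀ + ((1+n₁+1:ℕ):ZMod ℓ)) ≠ E π (d₀ + ((1+n₁:ℕ):ZMod ℓ)) := by
      rw [show (1+n₁+1 : ℕ) = 2+n₁ by omega]; exact hJ1
    have hJ2' : E π (d₀ + ((2+n₁+n₂+1:ℕ):ZMod ℓ)) ≠ E π (d₀ + ((2+n₁+n₂:ℕ):ZMod ℓ)) := by
      rw [show (2+n₁+n₂+1 : ℕ) = 3+n₁+n₂ by omega]; exact hJ2
    have hJ3' : E π (d₀ + ((3+n₁+n₂+n₃+1:ℕ):ZMod ℓ)) ≠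
        E π (d₀ + ((3+n₁+n₂+n₃:ℕ):ZMod ℓ)) := by
      rw [show (3+n₁+n₂+n₃+1 : ℕ) = 4+n₁+n₂+n₃ by omega]; exact hJ3
    set F : Finset (ZMod ℓ) :=
      {d₀ + ((0:ℕ):ZMod ℓ), d₀ + ((1+n₁:ℕ):ZMod ℓ), d₀ + ((2+n₁+n₂:ℕ):ZMod ℓ),
       d₀ + ((3+n₁+n₂+n₃:ℕ):ZMod ℓ), d₀ + ((4+n₁+n₂+n₃+n₄:ℕ):ZMod ℓ)} with hF
    have hsub : F ⊆ Finset.univ.filter (fun x : ZMod ℓ => E π (x+1) ≠ E π x) := by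
      intro x hx
      rw [hF] at hx
      simp only [Finset.mem_insert, Finset.mem_singleton] at hx
      rcases hx with rfl | rfl | rfl | rfl | rfl
      · exact hmem 0 hJ0'
      · exact hmem (1+n₁) hJ1'
      · exact hmem (2+n₁+n₂) hJ2'
      · exact hmem (3+n₁+n₂+n₃) hJ3'
      · exact hmem (4+n₁+n₂+n₃+n₄) hJ4
    have hcard : F.card = 5 := by
      rw [hF]
      rw [Finset.card_insert_of_notMem (by
        simp only [Finset.mem_insert, Finset.mem_singleton]
        push_neg
        exact ⟨hne 0 _ (by omega) (by omega) (by omega),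
               hne 0 _ (by omega) (by omega) (by omega),
               hne 0 _ (by omega) (by omega) (by omega),
               hne 0 _ (by omega) (by omega) (by omega)⟩)]
      rw [Finset.card_insert_of_notMem (by
        simp only [Finset.mem_insert, Finset.mem_singleton]
        push_neg
        exact ⟨hne _ _ (by omega) (by omega) (by omega),
               hne _ _ (by omega) (by omega) (by omega),
               hne _ _ (by omega) (by omega) (by omega)⟩)]
      rw [Finset.card_insert_of_notMem (by
        simp only [Finset.mem_insert, Finset.mem_singleton]
        push_neg
        exact ⟨hne _ _ (by omega) (by omega) (by omega),
               hne _ _ (by omega) (by omega) (by omega)⟩)]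
      rw [Finset.card_insert_of_notMem (by
        simp only [Finset.mem_singleton]
        exact hne _ _ (by omega) (by omega) (by omega))]
      rw [Finset.card_singleton]
    have := Finset.card_le_card hsub
    omega
  -- MAIN CASE : exactly four arcs, total length ℓ
  have hE4 : E π (d₀ + ((0:ℕ):ZMod ℓ)) = E π (d₀ + ((4+n₁+n₂+n₃:ℕ):ZMod ℓ)) := by
    have := hCgen (4+n₁+n₂+n₃) n₄ (by omega)
    rw [show 4+n₁+n₂+n₃+n₄ = ℓ from he₄, hℓ0] at this
    rw [← this]
    norm_num
  have hcov4 : ∀ x : ZMod ℓ, E π (x+1) ≠ E π x →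
      x = d₀ + ((0:ℕ):ZMod ℓ) ∨ x = d₀ + ((1+n₁:ℕ):ZMod ℓ) ∨
      x = d₀ + ((2+n₁+n₂:ℕ):ZMod ℓ) ∨ x = d₀ + ((3+n₁+n₂+n₃:ℕ):ZMod ℓ) := by
    intro x hx
    have hxe : x = d₀ + (((x - d₀).val : ℕ) : ZMod ℓ) := by
      rw [ZMod.natCast_rightInverse (x - d₀)]; ring
    set t := (x - d₀).val with htdef
    have htl : t < ℓ := ZMod.val_lt _
    have hx' : E π (d₀ + ((t+1:ℕ):ZMod ℓ)) ≠ E π (d₀ + ((t:ℕ):ZMod ℓ)) := by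
      rw [← hplus1, ← hxe]; exact hx
    by_contra hcon
    push_neg at hcon
    obtain ⟨hc0, hc1, hc2, hc3⟩ := hcon
    have ht0 : t ≠ 0 := fun h => hc0 (by rw [hxe, h])
    have ht1 : t ≠ 1+n₁ := fun h => hc1 (by rw [hxe, h])
    have ht2 : t ≠ 2+n₁+n₂ := fun h => hc2 (by rw [hxe, h])
    have ht3 : t ≠ 3+n₁+n₂+n₃ := fun h => hc3 (by rw [hxe, h])
    have hrange : (1 ≤ t ∧ t < 1+n₁) ∨ (2+n₁ ≤ t ∧ t < 2+n₁+n₂)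
        ∨ (3+n₁+n₂ ≤ t ∧ t < 3+n₁+n₂+n₃) ∨ (4+n₁+n₂+n₃ ≤ t ∧ t < ℓ) := by omega
    rcases hrange with ⟨h1,h2⟩ | ⟨h1,h2⟩ | ⟨h1,h2⟩ | ⟨h1,h2⟩
    · have := hMgen 1 (t-1) (by omega)
      rw [show 1+(t-1)+1 = t+1 by omega, show 1+(t-1) = t by omega] at this
      exact hx' this
    · have := hMgen (2+n₁) (t-(2+n₁)) (by omega)
      rw [show 2+n₁+(t-(2+n₁))+1 = t+1 by omega,
        show 2+n₁+(t-(2+n₁)) = t by omega] at this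
      exact hx' this
    · have := hMgen (3+n₁+n₂) (t-(3+n₁+n₂)) (by omega)
      rw [show 3+n₁+n₂+(t-(3+n₁+n₂))+1 = t+1 by omega,
        show 3+n₁+n₂+(t-(3+n₁+n₂)) = t by omega] at this
      exact hx' this
    · have := hMgen (4+n₁+n₂+n₃) (t-(4+n₁+n₂+n₃)) (by omega)
      rw [show 4+n₁+n₂+n₃+(t-(4+n₁+n₂+n₃))+1 = t+1 by omega,
        show 4+n₁+n₂+n₃+(t-(4+n₁+n₂+n₃)) = t by omega] at this
      exact hx' this
  -- Step 1 : π a₁ = d₃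
  have hπa1 : π (d₀ + ((1:ℕ):ZMod ℓ)) = d₀ + ((3+n₁+n₂+n₃:ℕ):ZMod ℓ) := by
    rcases hcov4 _ hπ1J with h | h | h | h
    · exfalso
      have h2 := heπ (d₀ + ((1:ℕ):ZMod ℓ))
      rw [h] at h2
      exact hd₀' h2.symm
    · exact absurd h hLR1
    · exfalso
      have h2 := heπ (d₀ + ((1:ℕ):ZMod ℓ))
      rw [h] at h2
      exact hJ1 ((hE2.symm.trans h2).trans hE1.symm)
    · exact h
  have hv31 : E π (d₀ + ((3+n₁+n₂:ℕ):ZMod ℓ)) = E π (d₀ + ((1:ℕ):ZMod ℓ)) := by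
    have h2 := heπ (d₀ + ((1:ℕ):ZMod ℓ))
    rw [hπa1] at h2
    exact hE3.symm.trans h2
  -- Step 2 : π a₂ = d₀
  have hstart2 : E π (d₀ + ((2+n₁:ℕ):ZMod ℓ)) ≠ E π ((d₀ + ((2+n₁:ℕ):ZMod ℓ)) - 1) := by
    rw [show (d₀ + ((2+n₁:ℕ):ZMod ℓ)) - 1 = d₀ + ((1+n₁:ℕ):ZMod ℓ) by push_cast; ring]
    exact hJ1
  have hπ2J := L2 (d₀ + ((2+n₁:ℕ):ZMod ℓ)) hstart2
  have hπa2 : π (d₀ + ((2+n₁:ℕ):ZMod ℓ)) = d₀ + ((0:ℕ):ZMod ℓ) := by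
    rcases hcov4 _ hπ2J with h | h | h | h
    · exact h
    · exfalso
      have h2 := heπ (d₀ + ((2+n₁:ℕ):ZMod ℓ))
      rw [h] at h2
      exact hJ1 h2.symm
    · exfalso
      refine LR (d₀ + ((2+n₁:ℕ):ZMod ℓ)) n₂ ?_ ?_
      · intro j hj
        have := hCgen (2+n₁) j (by omega)
        rwa [← hshift] at this
      · rw [h, ← hshift]
    · exfalso
      have h2 := heπ (d₀ + ((2+n₁:ℕ):ZMod ℓ))
      rw [h] at h2
      exact hJ1 (((hE3.symm.trans h2).symm.trans hv31).trans hE1.symm)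
  have hv42 : E π (d₀ + ((0:ℕ):ZMod ℓ)) = E π (d₀ + ((2+n₁:ℕ):ZMod ℓ)) := by
    have h2 := heπ (d₀ + ((2+n₁:ℕ):ZMod ℓ))
    rw [hπa2] at h2
    exact h2
  -- Step 3 prep
  have hJ1'' : E π ((d₀ + ((1+n₁:ℕ):ZMod ℓ)) + 1) ≠ E π (d₀ + ((1+n₁:ℕ):ZMod ℓ)) := by
    rw [hplus1, show 1+n₁+1 = 2+n₁ by omega]
    exact hJ1
  have hLd1 := L3 (d₀ + ((1+n₁:ℕ):ZMod ℓ)) hJ1''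
  have hLd1' : E π ((π (d₀ + ((1+n₁:ℕ):ZMod ℓ)) - 1) + 1) ≠
      E π (π (d₀ + ((1+n₁:ℕ):ZMod ℓ)) - 1) := by
    rwa [sub_add_cancel]
  have hvd1 : E π (π (d₀ + ((1+n₁:ℕ):ZMod ℓ))) = E π (d₀ + ((1:ℕ):ZMod ℓ)) :=
    (heπ _).trans hE1
  have hstep : ∀ (y : ZMod ℓ) (u : ℕ), y - 1 = d₀ + ((u:ℕ):ZMod ℓ) →
      y = d₀ + ((u+1:ℕ):ZMod ℓ) := by
    intro y u h
    rw [← hplus1, ← h, sub_add_cancel]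
  have hn31 : n₃ = n₁ := by
    have hπd1 : π (d₀ + ((1+n₁:ℕ):ZMod ℓ)) = d₀ + ((3+n₁+n₂:ℕ):ZMod ℓ) := by
      rcases hcov4 _ hLd1' with h | h | h | h
      · exfalso
        have h6 := hstep _ _ h
        rw [show (0+1:ℕ) = 1 from rfl] at h6
        have h7 := hinv (d₀ + ((1+n₁:ℕ):ZMod ℓ))
        rw [h6, hπa1] at h7
        have := natinj (3+n₁+n₂+n₃) (1+n₁) (by omega) (by omega) (add_left_cancel h7)
        omega
      · exfalso
        have h6 := hstep _ _ h
        rw [show (1+n₁+1:ℕ) = 2+n₁ by omega] at h6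
        rw [h6] at hvd1
        exact hJ1 (hvd1.trans hE1.symm)
      · have h6 := hstep _ _ h
        rwa [show (2+n₁+n₂+1:ℕ) = 3+n₁+n₂ by omega] at h6
      · exfalso
        have h6 := hstep _ _ h
        rw [show (3+n₁+n₂+n₃+1:ℕ) = 4+n₁+n₂+n₃ by omega] at h6
        rw [h6, ← hE4] at hvd1
        exact hd₀' hvd1.symm
    have hcomp : π (d₀ + ((1+n₁:ℕ):ZMod ℓ)) =
        d₀ + ((1:ℕ):ZMod ℓ) + ((3+n₁+n₂+n₃:ℕ):ZMod ℓ) - ((1+n₁:ℕ):ZMod ℓ) := by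
      have h1 := hπe (d₀ + ((1+n₁:ℕ):ZMod ℓ))
      rw [hE1] at h1
      rw [h1, show E π (d₀ + ((1:ℕ):ZMod ℓ)) =
        (d₀ + ((1:ℕ):ZMod ℓ)) + π (d₀ + ((1:ℕ):ZMod ℓ)) from rfl, hπa1]
      ring
    have hcast : ((n₃:ℕ):ZMod ℓ) = ((n₁:ℕ):ZMod ℓ) := by
      have h2 := hcomp.symm.trans hπd1
      push_cast at h2 ⊢
      linear_combination h2
    exact natinj _ _ (by omega) (by omega) hcast
  -- Step 4 : n₄ = n₂
  have hJ2'' : E π ((d₀ + ((2+n₁+n₂:ℕ):ZMod ℓ)) + 1) ≠ E π (d₀ + ((2+n₁+n₂:ℕ):ZMod ℓ)) := by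
    rw [hplus1, show 2+n₁+n₂+1 = 3+n₁+n₂ by omega]
    exact hJ2
  have hLd2 := L3 (d₀ + ((2+n₁+n₂:ℕ):ZMod ℓ)) hJ2''
  have hLd2' : E π ((π (d₀ + ((2+n₁+n₂:ℕ):ZMod ℓ)) - 1) + 1) ≠
      E π (π (d₀ + ((2+n₁+n₂:ℕ):ZMod ℓ)) - 1) := by
    rwa [sub_add_cancel]
  have hvd2 : E π (π (d₀ + ((2+n₁+n₂:ℕ):ZMod ℓ))) = E π (d₀ + ((2+n₁:ℕ):ZMod ℓ)) :=
    (heπ _).trans hE2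
  have hn42 : n₄ = n₂ := by
    have hπd2 : π (d₀ + ((2+n₁+n₂:ℕ):ZMod ℓ)) = d₀ + ((4+n₁+n₂+n₃:ℕ):ZMod ℓ) := by
      rcases hcov4 _ hLd2' with h | h | h | h
      · exfalso
        have h6 := hstep _ _ h
        rw [show (0+1:ℕ) = 1 from rfl] at h6
        rw [h6] at hvd2
        exact hJ1 (hvd2.symm.trans hE1.symm)
      · exfalso
        have h6 := hstep _ _ h
        rw [show (1+n₁+1:ℕ) = 2+n₁ by omega] at h6
        have h7 := hinv (d₀ + ((2+n₁+n₂:ℕ):ZMod ℓ))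
        rw [h6, hπa2] at h7
        have := natinj 0 (2+n₁+n₂) (by omega) (by omega) (add_left_cancel h7)
        omega
      · exfalso
        have h6 := hstep _ _ h
        rw [show (2+n₁+n₂+1:ℕ) = 3+n₁+n₂ by omega] at h6
        rw [h6] at hvd2
        exact hJ1 ((hvd2.symm.trans hv31).trans hE1.symm)
      · have h6 := hstep _ _ h
        rwa [show (3+n₁+n₂+n₃+1:ℕ) = 4+n₁+n₂+n₃ by omega] at h6
    have hcomp2 : π (d₀ + ((2+n₁+n₂:ℕ):ZMod ℓ)) =
        d₀ + ((2+n₁:ℕ):ZMod ℓ) + ((0:ℕ):ZMod ℓ) - ((2+n₁+n₂:ℕ):ZMod ℓ) := by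
      have h1 := hπe (d₀ + ((2+n₁+n₂:ℕ):ZMod ℓ))
      rw [hE2] at h1
      rw [h1, show E π (d₀ + ((2+n₁:ℕ):ZMod ℓ)) =
        (d₀ + ((2+n₁:ℕ):ZMod ℓ)) + π (d₀ + ((2+n₁:ℕ):ZMod ℓ)) from rfl, hπa2]
      ring
    have hℓZ : ((4+n₁+n₂+n₃+n₄:ℕ):ZMod ℓ) = 0 := by rw [he₄]; exact hℓ0
    have hcast2 : ((n₄:ℕ):ZMod ℓ) = ((n₂:ℕ):ZMod ℓ) := by
      have h2 := hcomp2.symm.trans hπd2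
      push_cast at h2 hℓZ ⊢
      linear_combination h2 + hℓZ
    exact natinj _ _ (by omega) (by omega) hcast2
  -- conclusion
  have hm : ℓ/2 = 2+n₁+n₂ := by omega
  have hmm0 : ((2+n₁+n₂:ℕ):ZMod ℓ) + ((2+n₁+n₂:ℕ):ZMod ℓ) = 0 := by
    rw [← Nat.cast_add, show (2+n₁+n₂)+(2+n₁+n₂) = ℓ by omega, hℓ0]
  have hLcast : ∀ u : ℕ, ((u+ℓ:ℕ):ZMod ℓ) = ((u:ℕ):ZMod ℓ) := by
    intro u; rw [Nat.cast_add, hℓ0, add_zero]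
  have hEper : ∀ x : ZMod ℓ, E π (x + ((2+n₁+n₂:ℕ):ZMod ℓ)) = E π x := by
    intro x
    have hxe : x = d₀ + (((x - d₀).val : ℕ) : ZMod ℓ) := by
      rw [ZMod.natCast_rightInverse (x - d₀)]; ring
    obtain ⟨t, ht1, ht2, hxt⟩ : ∃ t, 1 ≤ t ∧ t ≤ ℓ ∧ x = d₀ + ((t:ℕ):ZMod ℓ) := by
      rcases Nat.eq_zero_or_pos (x - d₀).val with h0 | h0
      · refine ⟨ℓ, by omega, le_rfl, ?_⟩
        rw [hℓ0, add_zero, hxe, h0]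
        norm_num
      · exact ⟨(x-d₀).val, h0, (ZMod.val_lt _).le, hxe⟩
    have hx2 : x + ((2+n₁+n₂:ℕ):ZMod ℓ) = d₀ + ((t+(2+n₁+n₂):ℕ):ZMod ℓ) := by
      rw [hxt, hshift]
    have hrange : (1 ≤ t ∧ t ≤ 1+n₁) ∨ (2+n₁ ≤ t ∧ t ≤ 2+n₁+n₂)
        ∨ (3+n₁+n₂ ≤ t ∧ t ≤ 3+n₁+n₂+n₃) ∨ (4+n₁+n₂+n₃ ≤ t ∧ t ≤ ℓ) := by omega
    rcases hrange with ⟨h1,h2⟩ | ⟨h1,h2⟩ | ⟨h1,h2⟩ | ⟨h1,h2⟩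
    · have hA : E π (d₀ + ((t:ℕ):ZMod ℓ)) = E π (d₀ + ((1:ℕ):ZMod ℓ)) := by
        rw [show (t:ℕ) = 1+(t-1) by omega]
        exact hCgen 1 (t-1) (by omega)
      have hB : E π (d₀ + ((t+(2+n₁+n₂):ℕ):ZMod ℓ)) =
          E π (d₀ + ((3+n₁+n₂:ℕ):ZMod ℓ)) := by
        rw [show t+(2+n₁+n₂) = (3+n₁+n₂)+(t-1) by omega]
        exact hCgen (3+n₁+n₂) (t-1) (by omega)
      rw [hx2, hxt, hB, hA, hv31]
    · have hA : E π (d₀ + ((t:ℕ):ZMod ℓ)) = E π (d₀ + ((2+n₁:ℕ):ZMod ℓ)) := by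
        rw [show (t:ℕ) = (2+n₁)+(t-(2+n₁)) by omega]
        exact hCgen (2+n₁) (t-(2+n₁)) (by omega)
      have hB : E π (d₀ + ((t+(2+n₁+n₂):ℕ):ZMod ℓ)) =
          E π (d₀ + ((4+n₁+n₂+n₃:ℕ):ZMod ℓ)) := by
        rw [show t+(2+n₁+n₂) = (4+n₁+n₂+n₃)+(t-(2+n₁)) by omega]
        exact hCgen (4+n₁+n₂+n₃) (t-(2+n₁)) (by omega)
      rw [hx2, hxt, hB, hA, ← hE4]
      exact hv42
    · have hA : E π (d₀ + ((t:ℕ):ZMod ℓ)) = E π (d₀ + ((3+n₁+n₂:ℕ):ZMod ℓ)) := by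
        rw [show (t:ℕ) = (3+n₁+n₂)+(t-(3+n₁+n₂)) by omega]
        exact hCgen (3+n₁+n₂) (t-(3+n₁+n₂)) (by omega)
      have hB : E π (d₀ + ((t+(2+n₁+n₂):ℕ):ZMod ℓ)) = E π (d₀ + ((1:ℕ):ZMod ℓ)) := by
        rw [show t+(2+n₁+n₂) = (1+(t-(3+n₁+n₂)))+ℓ by omega, hLcast]
        exact hCgen 1 (t-(3+n₁+n₂)) (by omega)
      rw [hx2, hxt, hB, hA, hv31]
    · have hA : E π (d₀ + ((t:ℕ):ZMod ℓ)) = E π (d₀ + ((4+n₁+n₂+n₃:ℕ):ZMod ℓ)) := by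
        rw [show (t:ℕ) = (4+n₁+n₂+n₃)+(t-(4+n₁+n₂+n₃)) by omega]
        exact hCgen (4+n₁+n₂+n₃) (t-(4+n₁+n₂+n₃)) (by omega)
      have hB : E π (d₀ + ((t+(2+n₁+n₂):ℕ):ZMod ℓ)) = E π (d₀ + ((2+n₁:ℕ):ZMod ℓ)) := by
        rw [show t+(2+n₁+n₂) = ((2+n₁)+(t-(4+n₁+n₂+n₃)))+ℓ by omega, hLcast]
        exact hCgen (2+n₁) (t-(4+n₁+n₂+n₃)) (by omega)
      rw [hx2, hxt, hB, hA]
      exact hv42.symm.trans hE4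
  intro x
  rw [show ((ℓ/2:ℕ):ZMod ℓ) = ((2+n₁+n₂:ℕ):ZMod ℓ) from by rw [hm]]
  have h1 := hπe (x + ((2+n₁+n₂:ℕ):ZMod ℓ))
  rw [hEper x] at h1
  rw [h1, hπe x]
  linear_combination -hmm0






/-- Case I2.N1: if b has cycle type [4,2^{(ℓ−4)/2}], c has cycle type [2^{ℓ/2}], and the
left-to-right product bc is an ℓ-cycle, then ⟨b,c⟩ preserves a partition into blocks of
size 2, hence is imprimitive. -/
theorem stmt12 (ℓ : ℕ) (hℓ : 8 ≤ ℓ) (hev : Even ℓ)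
    (b c : Equiv.Perm (Fin ℓ))
    (hb : b.cycleType = 4 ::ₘ Multiset.replicate ((ℓ - 4) / 2) 2)
    (hc : c.cycleType = Multiset.replicate (ℓ / 2) 2)
    (hbc : (c * b).cycleType = {ℓ}) :
    ∃ P : Finset (Finset (Fin ℓ)),
      (∀ p ∈ P, p.card = 2) ∧
      (∀ a : Fin ℓ, ∃! p, p ∈ P ∧ a ∈ p) ∧
      (∀ g ∈ Subgroup.closure ({b, c} : Set (Equiv.Perm (Fin ℓ))),
        ∀ p ∈ P, p.image ⇑g ∈ P) := by
  haveI : NeZero ℓ := ⟨by omega⟩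
  obtain ⟨l2, hl2⟩ := hev
  set s : Equiv.Perm (Fin ℓ) := c * b with hs
  -- facts about c
  have hcsupp : c.support = Finset.univ := by
    apply Finset.eq_univ_of_card
    have h1 := Equiv.Perm.sum_cycleType c
    rw [hc, Multiset.sum_replicate, smul_eq_mul] at h1
    rw [← h1, Fintype.card_fin]
    omega
  have hcne : ∀ x, c x ≠ x := fun x =>
    Equiv.Perm.mem_support.mp (hcsupp ▸ Finset.mem_univ x)
  have hc2 : c * c = 1 := by
    have h1 := Equiv.Perm.lcm_cycleType c
    rw [hc] at h1
    have h2 : orderOf c ∣ 2 := by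
      rw [← h1]
      apply Multiset.lcm_dvd.mpr
      intro u hu
      rw [Multiset.eq_of_mem_replicate hu]
    have h3 := orderOf_dvd_iff_pow_eq_one.mp h2
    rwa [pow_two] at h3
  have hcc : ∀ y, c (c y) = y := by
    intro y
    have := DFunLike.congr_fun hc2 y
    simpa [Equiv.Perm.mul_apply] using this
  have hcinv : c⁻¹ = c := inv_eq_of_mul_eq_one_right hc2
  -- facts about s
  have hssupp : s.support = Finset.univ := by
    apply Finset.eq_univ_of_card
    have h1 := Equiv.Perm.sum_cycleType s
    rw [hbc] at h1
    simp only [Multiset.sum_singleton] at h1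
    rw [← h1, Fintype.card_fin]
  have hscyc : s.IsCycle := by
    apply Equiv.Perm.card_cycleType_eq_one.mp
    rw [hbc]
    rfl
  have hords : orderOf s = ℓ := by
    have h1 := Equiv.Perm.lcm_cycleType s
    rw [hbc] at h1
    simpa using h1.symm
  -- facts about b
  have hbeq : b = c⁻¹ * s := by rw [hs]; group
  have hbapp : ∀ y, b y = c (s y) := by
    intro y
    rw [hbeq, hcinv]
    rfl
  have hbsupp : b.support = Finset.univ := by
    apply Finset.eq_univ_of_card
    have h1 := Equiv.Perm.sum_cycleType b
    rw [hb, Multiset.sum_cons, Multiset.sum_replicate, smul_eq_mul] at h1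
    rw [← h1, Fintype.card_fin]
    omega
  have hbne : ∀ x, b x ≠ x := fun x =>
    Equiv.Perm.mem_support.mp (hbsupp ▸ Finset.mem_univ x)
  -- the square of b moves at most 4 points
  have hcount : b.cycleType.count 4 = 1 := by
    rw [hb]
    simp [Multiset.count_cons_self, Multiset.count_replicate]
  have hfilter : (b.cycleFactorsFinset.filter
      (fun f => (Equiv.Perm.support f).card = 4)).card = b.cycleType.count 4 := by
    rw [Equiv.Perm.cycleType_def, Multiset.count_map, Finset.card, Finset.filter_val]
    congr 1
    apply Multiset.filter_congr
    intro f _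
    exact eq_comm
  obtain ⟨f4, hf4⟩ := Finset.card_eq_one.mp (hfilter.trans hcount)
  have hf4mem : f4 ∈ b.cycleFactorsFinset.filter
      (fun f => (Equiv.Perm.support f).card = 4) := by
    rw [hf4]; exact Finset.mem_singleton_self _
  have hf4card : f4.support.card = 4 := (Finset.mem_filter.mp hf4mem).2
  have hsubT : ∀ x : Fin ℓ, b (b x) ≠ x → x ∈ f4.support := by
    intro x hx
    have hbx : b x ≠ x := by
      intro h
      exact hx (by rw [h, h])
    have hmem := Equiv.Perm.cycleOf_mem_cycleFactorsFinset_iff.mpr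
      (Equiv.Perm.mem_support.mpr hbx)
    have hcyc := Equiv.Perm.isCycle_cycleOf b hbx
    have hcard4 : (b.cycleOf x).support.card = 4 := by
      have hcardmem : (b.cycleOf x).support.card ∈ b.cycleType := by
        rw [Equiv.Perm.cycleType_def]
        exact Multiset.mem_map_of_mem _ hmem
      rw [hb] at hcardmem
      rcases Multiset.mem_cons.mp hcardmem with h4' | h2'
      · exact h4'
      · exfalso
        have h2'' : (b.cycleOf x).support.card = 2 := Multiset.eq_of_mem_replicate h2'
        have hord : orderOf (b.cycleOf x) = 2 := by rw [hcyc.orderOf, h2'']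
        have hpow : (b.cycleOf x) ^ 2 = 1 := by
          rw [← hord]; exact pow_orderOf_eq_one _
        have happ : (b.cycleOf x ^ 2) x = x := by rw [hpow]; rfl
        rw [Equiv.Perm.cycleOf_pow_apply_self] at happ
        exact hx (by simpa [pow_two, Equiv.Perm.mul_apply] using happ)
    have hin : b.cycleOf x ∈ b.cycleFactorsFinset.filter
        (fun f => (Equiv.Perm.support f).card = 4) := Finset.mem_filter.mpr ⟨hmem, hcard4⟩
    rw [hf4] at hin
    have heq : b.cycleOf x = f4 := Finset.mem_singleton.mp hin
    have hxin : x ∈ (b.cycleOf x).support := by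
      rw [Equiv.Perm.mem_support, Equiv.Perm.cycleOf_apply_self]
      exact hbx
    rwa [heq] at hxin
  have hb2card : (Finset.univ.filter (fun x : Fin ℓ => b (b x) ≠ x)).card ≤ 4 := by
    calc (Finset.univ.filter (fun x : Fin ℓ => b (b x) ≠ x)).card
        ≤ f4.support.card := Finset.card_le_card (fun x hx =>
          hsubT x (Finset.mem_filter.mp hx).2)
      _ = 4 := hf4card
  -- transport to ZMod ℓ along the orbit of the ℓ-cycle s
  set x₀ : Fin ℓ := ⟨0, by omega⟩ with hx₀
  have hsx₀ : s x₀ ≠ x₀ := Equiv.Perm.mem_support.mp (hssupp ▸ Finset.mem_univ x₀)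
  have hgkey : ∀ k : ℕ, (s ^ k) x₀ = x₀ → ℓ ∣ k := by
    intro k hk
    have h1 : s ^ k = 1 := (hscyc.pow_eq_one_iff' hsx₀).mpr hk
    have h2 := orderOf_dvd_of_pow_eq_one h1
    rwa [hords] at h2
  set g : ZMod ℓ → Fin ℓ := fun i => (s ^ i.val) x₀ with hg
  have hginj : Function.Injective g := by
    have key : ∀ i j : ZMod ℓ, i.val ≤ j.val → g i = g j → i = j := by
      intro i j hle he
      have h2 : (s ^ (i.val + (j.val - i.val))) x₀ = (s ^ i.val) x₀ := by
        rw [Nat.add_sub_cancel' hle]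
        exact he.symm
      rw [pow_add, Equiv.Perm.mul_apply] at h2
      have h3 : (s ^ (j.val - i.val)) x₀ = x₀ := (s ^ i.val).injective h2
      have h4 := hgkey _ h3
      have h5 : j.val - i.val = 0 :=
        Nat.eq_zero_of_dvd_of_lt h4 (by have := ZMod.val_lt j; omega)
      apply ZMod.val_injective
      omega
    intro i j hij
    rcases le_total i.val j.val with h | h
    · exact key i j h hij
    · exact (key j i h hij.symm).symm
  have hgbij : Function.Bijective g :=
    (Fintype.bijective_iff_injective_and_card g).mpr
      ⟨hginj, by rw [ZMod.card, Fintype.card_fin]⟩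
  have hgadd : ∀ (i : ZMod ℓ) (k : ℕ), g (i + (k : ZMod ℓ)) = (s ^ k) (g i) := by
    intro i k
    show (s ^ (i + (k : ZMod ℓ)).val) x₀ = (s ^ k) ((s ^ i.val) x₀)
    rw [← Equiv.Perm.mul_apply, ← pow_add]
    have hmod : (i + (k : ZMod ℓ)).val ≡ k + i.val [MOD ℓ] := by
      rw [ZMod.val_add, ZMod.val_natCast]
      calc (i.val + k % ℓ) % ℓ ≡ i.val + k % ℓ [MOD ℓ] := Nat.mod_modEq _ ℓ
        _ ≡ i.val + k [MOD ℓ] := (Nat.mod_modEq k ℓ).add_left i.val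
        _ = k + i.val := by omega
    have hpow : s ^ (i + (k : ZMod ℓ)).val = s ^ (k + i.val) :=
      pow_eq_pow_iff_modEq.mpr (by rw [hords]; exact hmod)
    rw [hpow]
  set gE : ZMod ℓ ≃ Fin ℓ := Equiv.ofBijective g hgbij with hgE
  set π : ZMod ℓ → ZMod ℓ := fun i => gE.symm (c (gE i)) with hπ
  have hgEapp : ∀ i, gE i = g i := fun i => rfl
  have hgc : ∀ i, c (g i) = g (π i) := by
    intro i
    show c (gE i) = gE (gE.symm (c (gE i)))
    rw [Equiv.apply_symm_apply]
  have hπinv : ∀ i, π (π i) = i := by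
    intro i
    apply hginj
    rw [← hgc, ← hgc, hcc]
  have hπnf : ∀ i, π i ≠ i := by
    intro i h
    apply hcne (g i)
    rw [hgc, h]
  have hgs : ∀ i, s (g i) = g (i + 1) := by
    intro i
    have := hgadd i 1
    rw [Nat.cast_one, pow_one] at this
    exact this.symm
  have hgb : ∀ i, b (g i) = g (π (i + 1)) := by
    intro i
    rw [hbapp, hgs, hgc]
  have hπnb : ∀ i : ZMod ℓ, π (i + 1) ≠ i := by
    intro i h
    apply hbne (g i)
    rw [hgb, h]
  -- the E-jump set corresponds to the support of b²
  have hb2g : ∀ i, b (b (g i)) = g (π (π (i + 1) + 1)) := by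
    intro i
    rw [hgb, hgb]
  have hiff : ∀ i : ZMod ℓ,
      ((i+1) + π (i+1) ≠ i + π i) ↔ (b (b (g i)) ≠ g i) := by
    intro i
    rw [hb2g]
    constructor
    · intro h hcon
      apply h
      have h2 : π (π (i+1) + 1) = i := hginj hcon
      have h3 := congrArg π h2
      rw [hπinv] at h3
      linear_combination h3
    · intro h hcon
      apply h
      congr 1
      have h1 : π (i+1) + 1 = π i := by linear_combination hcon
      rw [h1, hπinv]
  have hπJ : (Finset.univ.filter
      (fun i : ZMod ℓ => E π (i+1) ≠ E π i)).card ≤ 4 := by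
    have hcardeq : (Finset.univ.filter
        (fun i : ZMod ℓ => E π (i+1) ≠ E π i)).card =
        (Finset.univ.filter (fun x : Fin ℓ => b (b x) ≠ x)).card := by
      apply Finset.card_bij' (fun i _ => g i) (fun x _ => gE.symm x)
      · intro a ha
        simp only [Finset.mem_filter, Finset.mem_univ, true_and] at ha ⊢
        exact (hiff a).mp ha
      · intro x hx
        simp only [Finset.mem_filter, Finset.mem_univ, true_and] at hx ⊢
        apply (hiff (gE.symm x)).mpr
        have : g (gE.symm x) = x := gE.apply_symm_apply x
        rw [this]
        exact hx
      · intro a _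
        exact gE.symm_apply_apply a
      · intro x _
        exact gE.apply_symm_apply x
    rw [hcardeq]
    exact hb2card
  -- apply the combinatorial key lemma
  have hper : ∀ i : ZMod ℓ, π (i + ((ℓ/2 : ℕ) : ZMod ℓ)) = π i + ((ℓ/2 : ℕ) : ZMod ℓ) :=
    key hℓ π hπinv hπnf hπnb hπJ
  set m : ℕ := ℓ / 2 with hm
  set z : Equiv.Perm (Fin ℓ) := s ^ m with hz
  have hgz : ∀ i : ZMod ℓ, z (g i) = g (i + (m : ZMod ℓ)) := fun i => (hgadd i m).symm
  have hcz : ∀ y : Fin ℓ, c (z y) = z (c y) := by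
    intro y
    obtain ⟨i, rfl⟩ := hgbij.surjective y
    rw [hgz, hgc, hgc, hgz, hper]
  have hzz : ∀ y, z (z y) = y := by
    intro y
    obtain ⟨i, rfl⟩ := hgbij.surjective y
    rw [hgz, hgz]
    have hcast : ((m:ℕ):ZMod ℓ) + ((m:ℕ):ZMod ℓ) = 0 := by
      rw [← Nat.cast_add, show m + m = ℓ by omega]
      exact ZMod.natCast_self ℓ
    rw [add_assoc, hcast, add_zero]
  have hznf : ∀ y, z y ≠ y := by
    intro y h
    obtain ⟨i, rfl⟩ := hgbij.surjective y
    rw [hgz] at h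
    have h2 := hginj h
    have h3 : ((m:ℕ) : ZMod ℓ) = 0 := by linear_combination h2
    rw [ZMod.natCast_eq_zero_iff] at h3
    have h4 := Nat.eq_zero_of_dvd_of_lt h3 (by omega)
    omega
  have hsz : ∀ y, s (z y) = z (s y) := by
    intro y
    have hcom : s * z = z * s := (Commute.refl s).pow_right m
    have := DFunLike.congr_fun hcom y
    simpa [Equiv.Perm.mul_apply] using this
  have hbz : ∀ y, b (z y) = z (b y) := by
    intro y
    rw [hbapp (z y), hbapp y, hsz, hcz]
  have hzcomm : ∀ g' ∈ Subgroup.closure ({b, c} : Set (Equiv.Perm (Fin ℓ))),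
      z * g' = g' * z := by
    intro g' hg'
    induction hg' using Subgroup.closure_induction with
    | mem x hx =>
      rcases hx with rfl | rfl
      · apply Equiv.ext
        intro y
        show z (x y) = x (z y)
        exact (hbz y).symm
      · apply Equiv.ext
        intro y
        show z (x y) = x (z y)
        exact (hcz y).symm
    | one => rw [mul_one, one_mul]
    | mul x y hx hy ihx ihy => rw [← mul_assoc, ihx, mul_assoc, ihy, ← mul_assoc]
    | inv x hx ih => exact (Commute.inv_right ih :)
  -- build the block system
  refine ⟨Finset.image (fun x : Fin ℓ => ({x, z x} : Finset (Fin ℓ))) Finset.univ, ?_, ?_, ?_⟩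
  · intro p hp
    obtain ⟨x, -, rfl⟩ := Finset.mem_image.mp hp
    rw [Finset.card_insert_of_notMem (by
      simp only [Finset.mem_singleton]
      exact fun h => hznf x h.symm), Finset.card_singleton]
  · intro a
    refine ⟨{a, z a}, ⟨Finset.mem_image_of_mem _ (Finset.mem_univ a),
      Finset.mem_insert_self _ _⟩, ?_⟩
    rintro q ⟨hq, haq⟩
    obtain ⟨x, -, rfl⟩ := Finset.mem_image.mp hq
    rcases Finset.mem_insert.mp haq with h | h
    · subst h; rfl
    · rw [Finset.mem_singleton] at h
      subst h
      rw [hzz x]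
      exact Finset.pair_comm x (z x)
  · intro g' hg' p hp
    obtain ⟨x, -, rfl⟩ := Finset.mem_image.mp hp
    have hcp : g' (z x) = z (g' x) := by
      have h1 := hzcomm g' hg'
      have h2 := DFunLike.congr_fun h1 x
      simp only [Equiv.Perm.mul_apply] at h2
      exact h2.symm
    rw [Finset.image_insert, Finset.image_singleton, hcp]
    exact Finset.mem_image_of_mem _ (Finset.mem_univ _)
end

section
/- Let ℓ ≥ 6 be an even integer, and let b, c, d ∈ Sym({1,…,ℓ}) be permutations such that b and c each have cycle type [2^{ℓ/2}] (fixed-point-free involutions), d is a transposition, and the product dcb is an ℓ-cycle. Then the subgroup ⟨b, c, d⟩ of Sym({1,…,ℓ}) is imprimitive: it preserves a nontrivial partition of {1,…,ℓ} into blocks of size 2. -/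
/-!
Put `ρ = b * c`. As `d = swap u v` is an involution, `ρ = σ * d` for the `ℓ`-cycle `σ = b * c * d`,
and multiplying by `d` cuts `σ` into two `ρ`-cycles: the one through `v`, of length `k` where
`σ ^ k` maps `u` to `v`, and the one through `u`, of length `k'` where `σ ^ k'` maps `v` to `u`.
Conjugation by `b` inverts `ρ`, so `b` maps `ρ`-cycles to `ρ`-cycles of the same length. It cannot
map `v` into its own `ρ`-cycle: `b` would then act on that cycle as a reflection, and either `b` or
`c = b * ρ` would have a fixed point. Hence `b` swaps the two `ρ`-cycles and `k = k'`.
Then `z = σ ^ k` is a fixed-point-free involution commuting with `σ` and with `d` (it swaps `u` and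
`v`), hence with `ρ`; and `b * z * b⁻¹ = z`, because both commute with `ρ` and agree at `u` and `v`.
So `⟨b, c, d⟩` centralizes `z` and permutes the pairs `{x, z x}`.
-/

open Equiv

namespace Equiv.Perm

variable {α : Type*}

section CycleType

variable [Fintype α] [DecidableEq α]

theorem apply_ne_self_of_sum_cycleType_eq_card {e : Perm α}
    (h : e.cycleType.sum = Fintype.card α) (x : α) : e x ≠ x := by
  rw [sum_cycleType] at h
  rw [← mem_support, Finset.eq_univ_of_card _ h]
  exact Finset.mem_univ x

theorem mul_self_eq_one_of_cycleType_eq_replicate_two {e : Perm α}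
    {m : ℕ} (he : e.cycleType = Multiset.replicate m 2) : e * e = 1 := by
  rw [← sq, pow_prime_eq_one_iff, he]
  exact fun _ => Multiset.eq_of_mem_replicate

end CycleType

theorem SameCycle.exists_least_pow_eq [Finite α] {σ : Perm α} {x y : α} (h : σ.SameCycle x y) :
    ∃ k : ℕ, (σ ^ k) x = y ∧ ∀ i < k, (σ ^ i) x ≠ y := by
  classical
  exact ⟨Nat.find h.exists_nat_pow_eq, Nat.find_spec h.exists_nat_pow_eq,
    fun _ => Nat.find_min h.exists_nat_pow_eq⟩

section Conjugation

variable {b ρ : Perm α}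

theorem apply_zpow_apply_of_conj_eq_inv (h : b * ρ * b⁻¹ = ρ⁻¹) (n : ℤ) (x : α) :
    b ((ρ ^ n) x) = (ρ ^ (-n)) (b x) := by
  have hn : b * ρ ^ n * b⁻¹ = ρ ^ (-n) := by rw [← conj_zpow, h, inv_zpow, zpow_neg]
  rw [← hn]
  simp [mul_apply]

theorem conj_mul_eq_inv {c : Perm α} (hb : b * b = 1) (hc : c * c = 1) :
    b * (b * c) * b⁻¹ = (b * c)⁻¹ := by
  rw [mul_inv_rev, inv_eq_of_mul_eq_one_right hb, inv_eq_of_mul_eq_one_right hc, ← mul_assoc, hb,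
    one_mul]

theorem not_sameCycle_apply_of_apply_ne_self {c : Perm α} (hb : b * b = 1) (hc : c * c = 1)
    (hbf : ∀ x, b x ≠ x) (hcf : ∀ x, c x ≠ x) (x : α) : ¬ (b * c).SameCycle x (b x) := by
  have hinv := apply_zpow_apply_of_conj_eq_inv (conj_mul_eq_inv hb hc)
  have hcb : ∀ y, c y = b ((b * c) y) := fun y => by rw [mul_apply, ← mul_apply b b, hb, one_apply]
  rintro ⟨t, ht⟩
  obtain ⟨s, rfl | rfl⟩ := Int.even_or_odd' t
  · apply hbf (((b * c) ^ s) x)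
    rw [hinv, ← ht, ← mul_apply, ← zpow_add]
    congr 2
    ring
  · apply hcf (((b * c) ^ s) x)
    rw [hcb, ← mul_apply (b * c), ← zpow_one_add, hinv, ← ht, ← mul_apply, ← zpow_add]
    congr 2
    ring

theorem pow_apply_eq_self_of_sameCycle_apply (h : b * ρ * b⁻¹ = ρ⁻¹) {x y : α}
    (hxy : ρ.SameCycle x (b y)) {n : ℕ} (hx : (ρ ^ n) x = x) : (ρ ^ n) y = y := by
  obtain ⟨t, ht⟩ := hxy
  have hby : (ρ ^ n) (b y) = b y := by
    rw [← ht, ← mul_apply, ((Commute.refl ρ).pow_left n |>.zpow_right t).eq, mul_apply, hx]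
  apply b.injective
  rw [← zpow_natCast, apply_zpow_apply_of_conj_eq_inv h, zpow_neg, zpow_natCast, inv_eq_iff_eq, hby]

theorem eq_of_commute_of_sameCycle_or {f g : Perm α} {u v : α}
    (hcov : ∀ x, ρ.SameCycle u x ∨ ρ.SameCycle v x) (hf : Commute f ρ) (hg : Commute g ρ)
    (hu : f u = g u) (hv : f v = g v) : f = g := by
  have hagree : ∀ w, f w = g w → ∀ x, ρ.SameCycle w x → f x = g x := by
    rintro w hw x ⟨i, rfl⟩
    rw [← mul_apply, (hf.zpow_right i).eq, mul_apply, hw, ← mul_apply, ← (hg.zpow_right i).eq,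
      mul_apply]
  ext x
  exact (hcov x).elim (hagree u hu x) (hagree v hv x)

theorem commute_of_conj_eq_inv {z : Perm α} {u v : α} (hb : b * b = 1) (h : b * ρ * b⁻¹ = ρ⁻¹)
    (hcov : ∀ x, ρ.SameCycle u x ∨ ρ.SameCycle v x) (hz : Commute z ρ) (hzu : z u = v)
    (hzv : z v = u) (hbu : ρ.SameCycle v (b u)) (hbv : ρ.SameCycle u (b v)) : Commute z b := by
  have hbzb : ∀ {x y}, z x = y → ρ.SameCycle x (b y) → b (z (b y)) = x := by
    rintro x y hzx ⟨t, ht⟩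
    rw [← ht, ← mul_apply z, (hz.zpow_right t).eq, mul_apply, hzx,
      apply_zpow_apply_of_conj_eq_inv h, ← ht, ← mul_apply, ← zpow_add, neg_add_cancel, zpow_zero,
      one_apply]
  have hbinv : b⁻¹ = b := inv_eq_of_mul_eq_one_right hb
  have hconj : b * z * b⁻¹ = z := by
    refine eq_of_commute_of_sameCycle_or hcov ?_ hz ?_ ?_
    · have := (Commute.conj_iff b).2 hz.inv_right
      rwa [← conj_inv, h, inv_inv] at this
    · simp only [mul_apply, hbinv]
      rw [hbzb hzv hbu, hzu]
    · simp only [mul_apply, hbinv]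
      rw [hbzb hzu hbv, hzv]
  exact (mul_inv_eq_iff_eq_mul.1 hconj).symm

end Conjugation

section MulSwap

variable [DecidableEq α] (σ : Perm α) {u v : α}

theorem mul_swap_pow_apply_right {k : ℕ} (hk : ∀ i, 0 < i → i < k → (σ ^ i) u ≠ u ∧ (σ ^ i) u ≠ v)
    {j : ℕ} (hj : 0 < j) (hjk : j ≤ k) : ((σ * swap u v) ^ j) v = (σ ^ j) u := by
  induction j, hj using Nat.le_induction with
  | base => simp [swap_apply_right]
  | succ j hj ih =>
    obtain ⟨hu, hv⟩ := hk j hj (by omega)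
    rw [pow_succ', pow_succ', mul_apply, ih (by omega), mul_apply, mul_apply,
      swap_apply_of_ne_of_ne hu hv]

theorem mul_swap_pow_apply_right_eq_self_iff {k : ℕ} (hk : (σ ^ k) u = v)
    (hmin : ∀ i < k, (σ ^ i) u ≠ v) ⦃i : ℕ⦄ (hi : 0 < i) (hik : i ≤ k) :
    ((σ * swap u v) ^ i) v = v ↔ i = k := by
  have hk' : ∀ i, 0 < i → i < k → (σ ^ i) u ≠ u ∧ (σ ^ i) u ≠ v := by
    refine fun i hi hik => ⟨fun h => hmin (k - i) (by omega) ?_, hmin i hik⟩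
    rw [← hk, ← h, ← mul_apply, ← pow_add, Nat.sub_add_cancel hik.le, h]
  rw [mul_swap_pow_apply_right σ hk' hi hik]
  refine ⟨fun h => ?_, fun h => h ▸ hk⟩
  by_contra hne
  exact hmin i (by omega) h

theorem sameCycle_mul_swap_or (n : ℕ) :
    (σ * swap u v).SameCycle u ((σ ^ n) u) ∨ (σ * swap u v).SameCycle v ((σ ^ n) u) := by
  induction n with
  | zero => exact Or.inl ⟨0, rfl⟩
  | succ n ih =>
    rw [pow_succ', mul_apply]
    by_cases hu : (σ ^ n) u = u
    · have : σ u = (σ * swap u v) v := by simp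
      exact Or.inr (by rw [hu, this, sameCycle_apply_right])
    by_cases hv : (σ ^ n) u = v
    · have : σ v = (σ * swap u v) u := by simp
      exact Or.inl (by rw [hv, this, sameCycle_apply_right])
    have : σ ((σ ^ n) u) = (σ * swap u v) ((σ ^ n) u) := by
      rw [mul_apply, swap_apply_of_ne_of_ne hu hv]
    rw [this, sameCycle_apply_right, sameCycle_apply_right]
    exact ih

-- `k` and `k'` are the lengths of the cycles of `σ * swap u v` through `v` and through `u`.
theorem eq_of_conj_mul_swap_eq_inv {b : Perm α} {k k' : ℕ} (huv : u ≠ v)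
    (h : b * (σ * swap u v) * b⁻¹ = (σ * swap u v)⁻¹)
    (hbu : (σ * swap u v).SameCycle v (b u)) (hbv : (σ * swap u v).SameCycle u (b v))
    (hk : (σ ^ k) u = v) (hkmin : ∀ i < k, (σ ^ i) u ≠ v)
    (hk' : (σ ^ k') v = u) (hk'min : ∀ i < k', (σ ^ i) v ≠ u) : k = k' := by
  have hk0 : 0 < k := Nat.pos_of_ne_zero fun h0 => huv (by rwa [h0, pow_zero, one_apply] at hk)
  have hk'0 : 0 < k' :=
    Nat.pos_of_ne_zero fun h0 => huv (by rw [h0, pow_zero, one_apply] at hk'; exact hk'.symm)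
  have hperv := mul_swap_pow_apply_right_eq_self_iff σ hk hkmin
  have hperu := mul_swap_pow_apply_right_eq_self_iff σ hk' hk'min
  rw [swap_comm] at hperu
  rcases le_total k k' with hle | hle
  · exact (hperu hk0 hle).1 <| pow_apply_eq_self_of_sameCycle_apply h hbu ((hperv hk0 le_rfl).2 rfl)
  · exact ((hperv hk'0 hle).1 <|
      pow_apply_eq_self_of_sameCycle_apply h hbv ((hperu hk'0 le_rfl).2 rfl)).symm

end MulSwap

theorem exists_involution_le_centralizer [Finite α] [DecidableEq α] {b c : Perm α} {u v : α}
    (huv : u ≠ v) (hb : b * b = 1) (hc : c * c = 1) (hbf : ∀ x, b x ≠ x) (hcf : ∀ x, c x ≠ x)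
    (hσ : (b * c * swap u v).IsCycle) (hσf : ∀ x, (b * c * swap u v) x ≠ x) :
    ∃ z : Perm α, z * z = 1 ∧ (∀ x, z x ≠ x) ∧
      Subgroup.closure {b, c, swap u v} ≤ Subgroup.centralizer {z} := by
  set σ := b * c * swap u v
  set ρ := b * c
  have hρ : ρ = σ * swap u v := by rw [mul_assoc, swap_mul_self, mul_one]
  have hinv : b * ρ * b⁻¹ = ρ⁻¹ := conj_mul_eq_inv hb hc
  have hcov : ∀ x, ρ.SameCycle u x ∨ ρ.SameCycle v x := fun x => by
    obtain ⟨n, rfl⟩ := (hσ.sameCycle (hσf u) (hσf x)).exists_nat_pow_eq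
    exact hρ ▸ sameCycle_mul_swap_or σ n
  have hbv : ρ.SameCycle u (b v) :=
    (hcov (b v)).resolve_right (not_sameCycle_apply_of_apply_ne_self hb hc hbf hcf v)
  have hbu : ρ.SameCycle v (b u) := by
    have := hbv.conj (g := b)
    rwa [hinv, sameCycle_inv, ← mul_apply, hb, one_apply, sameCycle_comm] at this
  obtain ⟨k, hk, hkmin⟩ := (hσ.sameCycle (hσf u) (hσf v)).exists_least_pow_eq
  obtain ⟨k', hk', hk'min⟩ := (hσ.sameCycle (hσf v) (hσf u)).exists_least_pow_eq
  obtain rfl : k = k' :=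
    eq_of_conj_mul_swap_eq_inv σ huv (hρ ▸ hinv) (hρ ▸ hbu) (hρ ▸ hbv) hk hkmin hk' hk'min
  refine ⟨σ ^ k, ?_, fun x hx => huv ?_, ?_⟩
  · rw [← pow_add, hσ.pow_eq_one_iff' (hσf u), pow_add, mul_apply, hk, hk']
  · rw [← hk, (hσ.pow_eq_one_iff' (hσf x)).2 hx, one_apply]
  have hzσ : Commute (σ ^ k) σ := (Commute.refl σ).pow_left k
  have hzd : Commute (σ ^ k) (swap u v) := by
    rw [Commute, SemiconjBy, mul_swap_eq_swap_mul, hk, hk', swap_comm]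
  have hzρ : Commute (σ ^ k) ρ := hρ ▸ hzσ.mul_right hzd
  have hzb : Commute (σ ^ k) b := commute_of_conj_eq_inv hb hinv hcov hzρ hk hk' hbu hbv
  have hcb : c = b * ρ := by rw [← mul_assoc, hb, one_mul]
  have hzc : Commute (σ ^ k) c := hcb ▸ hzb.mul_right hzρ
  rw [Subgroup.closure_le]
  rintro g (rfl | rfl | rfl) <;> rw [SetLike.mem_coe, Subgroup.mem_centralizer_singleton_iff]
  exacts [hzb.eq.symm, hzc.eq.symm, hzd.eq.symm]

theorem exists_pair_partition_of_le_centralizer [Fintype α] [DecidableEq α] {z : Perm α}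
    (hz : z * z = 1) (hzf : ∀ x, z x ≠ x) {H : Subgroup (Perm α)} (hH : H ≤ Subgroup.centralizer {z}) :
    ∃ P : Finset (Finset α), (∀ p ∈ P, p.card = 2) ∧ (∀ a : α, ∃! p, p ∈ P ∧ a ∈ p) ∧
      ∀ g ∈ H, ∀ p ∈ P, p.image ⇑g ∈ P := by
  have hzz : ∀ x, z (z x) = x := fun x => by rw [← mul_apply, hz, one_apply]
  refine ⟨Finset.univ.image fun x => {x, z x}, ?_, fun a => ⟨{a, z a}, by simp, ?_⟩, ?_⟩
  · simp only [Finset.mem_image, Finset.mem_univ, true_and, forall_exists_index,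
      forall_apply_eq_imp_iff]
    exact fun x => Finset.card_pair (hzf x).symm
  · simp only [Finset.mem_image, Finset.mem_univ, true_and, and_imp, forall_exists_index,
      forall_apply_eq_imp_iff, Finset.mem_insert, Finset.mem_singleton]
    rintro x (rfl | rfl)
    · rfl
    · rw [hzz, Finset.pair_comm]
  · simp only [Finset.mem_image, Finset.mem_univ, true_and, forall_exists_index,
      forall_apply_eq_imp_iff]
    intro g hg x
    have hgz : g (z x) = z (g x) := by
      rw [← mul_apply, Subgroup.mem_centralizer_singleton_iff.1 (hH hg), mul_apply]
    exact ⟨g x, by rw [Finset.image_insert, Finset.image_singleton, hgz]⟩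

end Equiv.Perm

theorem stmt13_general (ℓ : ℕ) (hev : Even ℓ)
    (b c d : Equiv.Perm (Fin ℓ))
    (hb : b.cycleType = Multiset.replicate (ℓ / 2) 2)
    (hc : c.cycleType = Multiset.replicate (ℓ / 2) 2)
    (hd : d.IsSwap)
    (hdcb : (b * c * d).cycleType = {ℓ}) :
    ∃ P : Finset (Finset (Fin ℓ)),
      (∀ p ∈ P, p.card = 2) ∧
      (∀ a : Fin ℓ, ∃! p, p ∈ P ∧ a ∈ p) ∧
      (∀ g ∈ Subgroup.closure ({b, c, d} : Set (Equiv.Perm (Fin ℓ))),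
        ∀ p ∈ P, p.image ⇑g ∈ P) := by
  have hsum : ∀ e : Equiv.Perm (Fin ℓ), e.cycleType = Multiset.replicate (ℓ / 2) 2 →
      e.cycleType.sum = Fintype.card (Fin ℓ) := fun e he => by
    rw [he, Multiset.sum_replicate, smul_eq_mul, Fintype.card_fin, Nat.div_mul_cancel hev.two_dvd]
  obtain ⟨u, v, huv, rfl⟩ := hd
  have hσ : (b * c * swap u v).cycleType.sum = Fintype.card (Fin ℓ) := by
    rw [hdcb, Multiset.sum_singleton, Fintype.card_fin]
  obtain ⟨z, hz, hzf, hzH⟩ := Perm.exists_involution_le_centralizer huv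
    (Perm.mul_self_eq_one_of_cycleType_eq_replicate_two hb)
    (Perm.mul_self_eq_one_of_cycleType_eq_replicate_two hc)
    (Perm.apply_ne_self_of_sum_cycleType_eq_card (hsum b hb))
    (Perm.apply_ne_self_of_sum_cycleType_eq_card (hsum c hc))
    (Perm.card_cycleType_eq_one.1 (by rw [hdcb]; rfl))
    (Perm.apply_ne_self_of_sum_cycleType_eq_card hσ)
  exact Perm.exists_pair_partition_of_le_centralizer hz hzf hzH

/-- Case I2.N2: if b and c are fixed-point-free involutions, d is a transposition, and the
left-to-right product dcb is an ℓ-cycle, then ⟨b,c,d⟩ preserves a partition into blocks of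
size 2, hence is imprimitive. -/
theorem stmt13 (ℓ : ℕ) (hℓ : 6 ≤ ℓ) (hev : Even ℓ)
    (b c d : Equiv.Perm (Fin ℓ))
    (hb : b.cycleType = Multiset.replicate (ℓ / 2) 2)
    (hc : c.cycleType = Multiset.replicate (ℓ / 2) 2)
    (hd : d.IsSwap)
    (hdcb : (b * c * d).cycleType = {ℓ}) :
    ∃ P : Finset (Finset (Fin ℓ)),
      (∀ p ∈ P, p.card = 2) ∧
      (∀ a : Fin ℓ, ∃! p, p ∈ P ∧ a ∈ p) ∧
      (∀ g ∈ Subgroup.closure ({b, c, d} : Set (Equiv.Perm (Fin ℓ))),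
        ∀ p ∈ P, p.image ⇑g ∈ P) :=
  stmt13_general ℓ hev b c d hb hc hd hdcb
end

section
/- Let x be a permutation of a finite set S of cardinality ℓ, let 2 ≤ t ≤ ℓ, and fix an orbit O of ⟨x⟩ on the set of t-element subsets of S. Then all ⟨x⟩-orbits of ordered t-tuples of pairwise distinct elements whose underlying set lies in O have the same cardinality; moreover this common cardinality equals e·|O|, where e is the order of the permutation induced by x^{|O|} on any fixed t-set belonging to O. -/
open Pointwise Function MulAction Subgroup

set_option linter.unusedSectionVars false

section helpers

variable {S : Type*} [Fintype S] [DecidableEq S] (x : Equiv.Perm S)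

omit [Fintype S] in
lemma fix_transfer (d : ℕ) (V V' : Finset S)
    (hV' : V' ∈ MulAction.orbit (Subgroup.zpowers x) V) :
    (∀ a ∈ V', (x ^ d) a = a) ↔ (∀ a ∈ V, (x ^ d) a = a) := by
  obtain ⟨⟨g, n, rfl⟩, rfl⟩ := hV'
  constructor
  · intro h a ha
    have hmem : (x ^ n : Equiv.Perm S) a ∈
        (⟨x ^ n, n, rfl⟩ : Subgroup.zpowers x) • V := Finset.smul_mem_smul_finset ha
    have := h _ hmem
    have hc : (x ^ d) ((x ^ n : Equiv.Perm S) a) = (x ^ n : Equiv.Perm S) ((x ^ d) a) := by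
      have hcm : x ^ d * x ^ n = x ^ n * x ^ d := by
        rw [← zpow_natCast x d, ← zpow_add, ← zpow_add, add_comm]
      calc (x ^ d) ((x ^ n : Equiv.Perm S) a) = (x ^ d * x ^ n) a := rfl
        _ = (x ^ n * x ^ d) a := by rw [hcm]
        _ = _ := rfl
    rw [hc] at this
    exact (x ^ n : Equiv.Perm S).injective this
  · intro h a ha
    rw [Finset.mem_smul_finset] at ha
    obtain ⟨b, hb, rfl⟩ := ha
    have hc : (x ^ d) ((⟨x ^ n, n, rfl⟩ : Subgroup.zpowers x) • b)
        = (x ^ n : Equiv.Perm S) ((x ^ d) b) := by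
      show (x ^ d * x ^ n) b = (x ^ n * x ^ d) b
      rw [← zpow_natCast x d, ← zpow_add, ← zpow_add, add_comm]
    rw [hc, h b hb]
    rfl

-- cardinality of an orbit of zpowers is the minimal period
lemma card_orbit_eq_mp {α : Type*} [MulAction (Equiv.Perm S) α] (b : α) :
    Nat.card (MulAction.orbit (Subgroup.zpowers x) b)
      = Function.minimalPeriod (x • ·) b := by
  rw [Nat.card_congr (MulAction.orbitZPowersEquiv x b), Nat.card_zmod]

-- period characterization for tuples
lemma tuple_period_iff {t : ℕ} (U : Fin t → S) (V₀ : Finset S)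
    (hU : Finset.univ.image U ∈ MulAction.orbit (Subgroup.zpowers x) V₀) (d : ℕ) :
    Function.IsPeriodicPt (x • ·) d U ↔ ∀ a ∈ V₀, (x ^ d) a = a := by
  rw [← fix_transfer x d V₀ _ hU]
  unfold Function.IsPeriodicPt
  rw [smul_iterate]
  constructor
  · intro h a ha
    rw [Finset.mem_image] at ha
    obtain ⟨i, _, rfl⟩ := ha
    exact congrFun h i
  · intro h
    funext i
    exact h (U i) (Finset.mem_image_of_mem U (Finset.mem_univ i))

-- pointwise fixing gives setwise fixing
lemma set_period (V : Finset S) (d : ℕ) (h : ∀ a ∈ V, (x ^ d) a = a) :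
    Function.IsPeriodicPt (x • ·) d V := by
  unfold Function.IsPeriodicPt
  rw [smul_iterate]
  show x ^ d • V = V
  ext a
  rw [Finset.mem_smul_finset]
  constructor
  · rintro ⟨b, hb, rfl⟩
    rw [show (x ^ d • b) = (x ^ d) b from rfl, h b hb]; exact hb
  · intro ha
    exact ⟨a, ha, h a ha⟩

end helpers


/-- All ⟨x⟩-orbits of ordered t-tuples of distinct elements whose underlying set lies in a
fixed orbit O of t-sets have the same cardinality, namely e·|O| where e is the order of
the permutation that x^{|O|} induces on any t-set in O. -/
theorem stmt18 {S : Type*} [Fintype S] [DecidableEq S] (x : Equiv.Perm S)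
    (ℓ t : ℕ) (hS : Fintype.card S = ℓ) (ht2 : 2 ≤ t) (htℓ : t ≤ ℓ)
    (O : Set (Finset S)) (V₀ : Finset S) (hV₀ : V₀.card = t)
    (hO : O = MulAction.orbit (Subgroup.zpowers x) V₀) :
    (∀ U U' : Fin t → S, Function.Injective U → Function.Injective U' →
        Finset.univ.image U ∈ O → Finset.univ.image U' ∈ O →
        Nat.card (MulAction.orbit (Subgroup.zpowers x) U)
          = Nat.card (MulAction.orbit (Subgroup.zpowers x) U')) ∧
    (∀ V ∈ O, ∀ e : ℕ, 0 < e →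
        (∀ a ∈ V, ((x ^ Nat.card O) ^ e) a = a) →
        (∀ e' : ℕ, 0 < e' → (∀ a ∈ V, ((x ^ Nat.card O) ^ e') a = a) → e ≤ e') →
        ∀ U : Fin t → S, Function.Injective U → Finset.univ.image U ∈ O →
          Nat.card (MulAction.orbit (Subgroup.zpowers x) U) = e * Nat.card O) := by
  subst hO
  have hNpos : 0 < orderOf x := orderOf_pos x
  have hPN : ∀ a ∈ V₀, (x ^ orderOf x) a = a := by
    intro a _; rw [pow_orderOf_eq_one]; rfl
  -- every tuple with image in O is a periodic point, with period set = {d | P d}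
  have key : ∀ U : Fin t → S,
      Finset.univ.image U ∈ MulAction.orbit (Subgroup.zpowers x) V₀ →
      (0 < Function.minimalPeriod (x • ·) U ∧
       ∀ a ∈ V₀, (x ^ Function.minimalPeriod (x • ·) U) a = a) := by
    intro U hU
    have hper : U ∈ Function.periodicPts (x • ·) :=
      ⟨orderOf x, hNpos, (tuple_period_iff x U V₀ hU (orderOf x)).mpr hPN⟩
    exact ⟨Function.minimalPeriod_pos_of_mem_periodicPts hper,
      (tuple_period_iff x U V₀ hU _).mp (Function.isPeriodicPt_minimalPeriod _ _)⟩
  constructor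
  · intro U U' _ _ hU hU'
    rw [card_orbit_eq_mp, card_orbit_eq_mp]
    obtain ⟨hpos, hP⟩ := key U hU
    obtain ⟨hpos', hP'⟩ := key U' hU'
    exact Nat.dvd_antisymm
      (((tuple_period_iff x U V₀ hU _).mpr hP').minimalPeriod_dvd)
      (((tuple_period_iff x U' V₀ hU' _).mpr hP).minimalPeriod_dvd)
  · intro V hV e hepos he hemin U hUinj hU
    set m := Nat.card (MulAction.orbit (Subgroup.zpowers x) V₀) with hm
    -- m is the minimal period of V₀
    have hmV : m = Function.minimalPeriod (x • ·) V₀ := card_orbit_eq_mp x V₀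
    have hmpos : 0 < m := by
      rw [hmV]
      exact Function.minimalPeriod_pos_of_mem_periodicPts
        ⟨orderOf x, hNpos, set_period x V₀ (orderOf x) hPN⟩
    have hm_dvd : ∀ d : ℕ, (∀ a ∈ V₀, (x ^ d) a = a) → m ∣ d := by
      intro d hd
      rw [hmV]
      exact (set_period x V₀ d hd).minimalPeriod_dvd
    -- transfer e-conditions from V to V₀
    have hQ : ∀ k : ℕ, (∀ a ∈ V, ((x ^ m) ^ k) a = a) ↔ (∀ a ∈ V₀, (x ^ (m * k)) a = a) := by
      intro k
      rw [← fix_transfer x (m * k) V₀ V hV, pow_mul]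
    rw [card_orbit_eq_mp]
    obtain ⟨hDpos, hPD⟩ := key U hU
    set D := Function.minimalPeriod (x • ·) U with hD
    obtain ⟨k, hk⟩ := hm_dvd D hPD
    have hkpos : 0 < k := by
      rcases Nat.eq_zero_or_pos k with h | h
      · rw [h, mul_zero] at hk; omega
      · exact h
    have hek : e ≤ k := hemin k hkpos ((hQ k).mpr (hk ▸ hPD))
    have hDdvd : D ∣ m * e :=
      ((tuple_period_iff x U V₀ hU (m * e)).mpr ((hQ e).mp he)).minimalPeriod_dvd
    rw [hk] at hDdvd
    have hke : k ≤ e := Nat.le_of_dvd hepos ((mul_dvd_mul_iff_left hmpos.ne').mp hDdvd)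
    rw [hk, Nat.le_antisymm hke hek, mul_comm]
end

section
/- Let x be a permutation of a finite set S and let q be a prime power. Suppose U is an ordered t-tuple of pairwise distinct elements of S whose ⟨x⟩-orbit (under the diagonal action) has cardinality r_U, and suppose q divides r_U / |O|, where O is the ⟨x⟩-orbit of the underlying t-set of U. Then there exist q elements v_1, …, v_q among the entries of U that form a single q-cycle under the permutation x^{r_U / q}. -/
open Pointwise

private lemma stmt19_dvd_div {p L r : ℕ} (hp : p.Prime) (hr : r ≠ 0) (hL0 : L ≠ 0)
    (hLr : L ∣ r) (hlt : L.factorization p < r.factorization p) : L ∣ r / p := by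
  have hpr : p ∣ r := by
    have := (Nat.Prime.pow_dvd_iff_le_factorization (n := r) hp hr (k := 1))
    rw [pow_one] at this
    exact this.2 (by omega)
  have hrp : 0 < r / p := Nat.div_pos (Nat.le_of_dvd (Nat.pos_of_ne_zero hr) hpr) hp.pos
  have hne : r / p ≠ 0 := hrp.ne'
  rw [← Nat.factorization_le_iff_dvd hL0 hne, Nat.factorization_div hpr, hp.factorization,
    Finsupp.le_def]
  intro l
  have h3 := Finsupp.le_def.1 ((Nat.factorization_le_iff_dvd hL0 hr).2 hLr) l
  rw [Finsupp.tsub_apply, Finsupp.single_apply]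
  by_cases hl : l = p
  · subst hl; rw [if_pos rfl]; omega
  · rw [if_neg (Ne.symm hl)]; omega

private lemma stmt19_gcd {p e L r : ℕ} (hp : p.Prime) (hr : r ≠ 0) (hL0 : L ≠ 0)
    (hLr : L ∣ r) (hvp : r.factorization p ≤ L.factorization p) (hqr : p ^ e ∣ r) :
    L = p ^ e * Nat.gcd L (r / p ^ e) := by
  have hq0 : p ^ e ≠ 0 := pow_ne_zero _ hp.pos.ne'
  have h1 : p ^ e * Nat.gcd L (r / p ^ e) = Nat.gcd (p ^ e * L) r := by
    rw [← Nat.gcd_mul_left, Nat.mul_div_cancel' hqr]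
  rw [h1]
  refine (Nat.dvd_antisymm ?_ (Nat.dvd_gcd ⟨p ^ e, mul_comm _ _⟩ hLr)).symm
  have hg0 : Nat.gcd (p ^ e * L) r ≠ 0 := fun h => hr (Nat.eq_zero_of_gcd_eq_zero_right h)
  rw [← Nat.factorization_le_iff_dvd hg0 hL0, Finsupp.le_def]
  intro l
  have h2 := Finsupp.le_def.1 ((Nat.factorization_le_iff_dvd hg0 (mul_ne_zero hq0 hL0)).2
    (Nat.gcd_dvd_left _ _)) l
  have h3 := Finsupp.le_def.1 ((Nat.factorization_le_iff_dvd hg0 hr).2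
    (Nat.gcd_dvd_right _ _)) l
  rw [Nat.factorization_mul hq0 hL0, Nat.factorization_pow, hp.factorization,
    Finsupp.add_apply, Finsupp.smul_apply, Finsupp.single_apply] at h2
  by_cases hl : l = p
  · subst hl; omega
  · rw [if_neg (Ne.symm hl)] at h2; simp at h2; omega

/-- If q is a prime power dividing r_U/|O|, then some q entries of U form a single
q-cycle under x^{r_U/q}. -/
theorem stmt19 {S : Type*} [Fintype S] [DecidableEq S] (x : Equiv.Perm S)
    (q : ℕ) (hq : IsPrimePow q) (t : ℕ) (U : Fin t → S) (hinj : Function.Injective U)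
    (rU : ℕ) (hrU : rU = Nat.card (MulAction.orbit (Subgroup.zpowers x) U))
    (hdvd : q ∣ rU / Nat.card (MulAction.orbit (Subgroup.zpowers x) (Finset.univ.image U))) :
    ∃ v : Fin q → S, Function.Injective v ∧ (∀ i, ∃ j, v i = U j) ∧
      ∀ i : Fin q, (x ^ (rU / q)) (v i) = v (finRotate q i) := by
  classical
  obtain ⟨p, e, hpp, he, hpe⟩ := hq
  have hp : p.Prime := hpp.nat_prime
  set T : Finset S := Finset.univ.image U with hTdef
  set m := Nat.card (MulAction.orbit (Subgroup.zpowers x) T) with hmdef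
  have hrU' : rU = Function.minimalPeriod (x • ·) U := by
    rw [hrU, Nat.card_congr (MulAction.orbitZPowersEquiv x U), Nat.card_zmod]
  have hm' : m = Function.minimalPeriod (x • ·) T := by
    rw [hmdef, Nat.card_congr (MulAction.orbitZPowersEquiv x T), Nat.card_zmod]
  have hUfix : ∀ n : ℕ, x ^ n • U = U ↔ rU ∣ n := by
    intro n; rw [hrU']; exact MulAction.pow_smul_eq_iff_minimalPeriod_dvd
  have hTfix : ∀ n : ℕ, x ^ n • T = T ↔ m ∣ n := by
    intro n; rw [hm']; exact MulAction.pow_smul_eq_iff_minimalPeriod_dvd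
  set L : Fin t → ℕ := fun j => Function.minimalPeriod (x • ·) (U j) with hLdef
  have hLfix : ∀ (n : ℕ) (j : Fin t), x ^ n • U j = U j ↔ L j ∣ n := by
    intro n j; exact MulAction.pow_smul_eq_iff_minimalPeriod_dvd
  have hcomp : ∀ n : ℕ, x ^ n • U = U ↔ ∀ j, L j ∣ n := by
    intro n
    rw [funext_iff]
    exact forall_congr' fun j => by rw [← hLfix n j]; simp [Pi.smul_apply]
  have hLr : ∀ j, L j ∣ rU := fun j => (hcomp rU).1 ((hUfix rU).2 dvd_rfl) j
  have hrU0 : rU ≠ 0 := by rw [hrU']; exact NeZero.ne _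
  have hL0 : ∀ j, L j ≠ 0 := fun j => NeZero.ne _
  have hm0 : m ≠ 0 := by rw [hm']; exact NeZero.ne _
  have himg : ∀ n : ℕ, x ^ n • U = U → x ^ n • T = T := by
    intro n hn
    rw [hTdef, Finset.smul_finset_def, Finset.image_image]
    congr 1
  have hmr : m ∣ rU := (hTfix rU).1 (himg rU ((hUfix rU).2 dvd_rfl))
  have hq2 : 2 ≤ q := by
    rw [← hpe]
    calc 2 ≤ p := hp.two_le
      _ ≤ p ^ e := Nat.le_self_pow he.ne' p
  have hqr : q ∣ rU := dvd_trans hdvd (Nat.div_dvd_of_dvd hmr)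
  have hmq : m * q ∣ rU := by
    have h := Nat.mul_dvd_mul_left m hdvd
    rwa [Nat.mul_div_cancel' hmr] at h
  have hmd : m ∣ rU / q := (Nat.dvd_div_iff_mul_dvd hqr).2 (by rwa [mul_comm q m])
  have ht : t ≠ 0 := by
    rintro rfl
    have h1 : x ^ 1 • U = U := funext fun j => j.elim0
    have h2 := Nat.le_of_dvd one_pos ((hUfix 1).1 h1)
    have h3 := Nat.le_of_dvd (by omega) hqr
    omega
  have hne : Nonempty (Fin t) := ⟨⟨0, Nat.pos_of_ne_zero ht⟩⟩
  obtain ⟨j0, -, hmax⟩ := Finset.exists_max_image Finset.univ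
    (fun j => (L j).factorization p) Finset.univ_nonempty
  have hpq : p ∣ q := by rw [← hpe]; exact dvd_pow_self p he.ne'
  have hpr : p ∣ rU := hpq.trans hqr
  have key : rU.factorization p ≤ (L j0).factorization p := by
    by_contra hk
    push_neg at hk
    have hall : ∀ j, L j ∣ rU / p := fun j =>
      stmt19_dvd_div hp hrU0 (hL0 j) (hLr j) (lt_of_le_of_lt (hmax j (Finset.mem_univ j)) hk)
    have h1 : rU ∣ rU / p := (hUfix _).1 ((hcomp _).2 hall)
    have h4 : 0 < rU / p := Nat.div_pos (Nat.le_of_dvd (Nat.pos_of_ne_zero hrU0) hpr) hp.pos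
    have h5 := Nat.le_of_dvd h4 h1
    have h6 : rU / p < rU := Nat.div_lt_self (Nat.pos_of_ne_zero hrU0) hp.one_lt
    omega
  set d := rU / q with hddef
  set a := U j0 with hadef
  set G := Nat.gcd (L j0) d with hGdef
  have hgcd : L j0 = q * G := by
    rw [hGdef, hddef, ← hpe]
    rw [← hpe] at hqr
    exact stmt19_gcd hp hrU0 (hL0 j0) (hLr j0) key hqr
  have hG0 : 0 < G := Nat.pos_of_ne_zero fun h =>
    hL0 j0 (Nat.eq_zero_of_gcd_eq_zero_left (hGdef ▸ h))
  have hGd : G ∣ d := hGdef ▸ Nat.gcd_dvd_right _ _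
  have hLG : L j0 / G = q := by rw [hgcd]; exact Nat.mul_div_cancel _ hG0
  have hcop : Nat.Coprime q (d / G) := by
    have h := Nat.coprime_div_gcd_div_gcd (m := L j0) (n := d) (hGdef ▸ hG0)
    rw [← hGdef, hLG] at h
    exact h
  have hkey : ∀ c : ℕ, L j0 ∣ d * c → q ∣ c := by
    intro c hc
    rw [hgcd] at hc
    have hc' : q * G ∣ d / G * c * G := by
      rwa [mul_right_comm, Nat.div_mul_cancel hGd]
    have h1 : q ∣ d / G * c := (Nat.mul_dvd_mul_iff_right hG0).1 hc'
    exact hcop.dvd_of_dvd_mul_left h1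
  have hfixiff : ∀ N : ℕ, (x ^ N) a = a ↔ L j0 ∣ N := fun N => hLfix N j0
  have hdq : d * q = rU := Nat.div_mul_cancel hqr
  have hmod : ∀ k : ℕ, (x ^ (d * k)) a = (x ^ (d * (k % q))) a := by
    intro k
    have harith : d * k = d * (k % q) + d * q * (k / q) := by
      conv_lhs => rw [← Nat.div_add_mod k q]
      ring
    rw [harith, pow_add, Equiv.Perm.mul_apply,
      (hfixiff _).2 (hdq ▸ (hLr j0).mul_right (k / q))]
  have hTd : x ^ d • T = T := (hTfix d).2 hmd
  have hstep : ∀ s ∈ T, (x ^ d) s ∈ T := by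
    intro s hs
    have h := Finset.smul_mem_smul_finset (a := x ^ d) hs
    rwa [hTd] at h
  have haT : a ∈ T := by
    rw [hTdef]; exact Finset.mem_image_of_mem U (Finset.mem_univ j0)
  have hmemT : ∀ k : ℕ, (x ^ (d * k)) a ∈ T := by
    intro k
    induction k with
    | zero => simpa using haT
    | succ n ih =>
      have harith : d * (n + 1) = d + d * n := by ring
      rw [harith, pow_add, Equiv.Perm.mul_apply]
      exact hstep _ ih
  obtain ⟨n, rfl⟩ : ∃ n, q = n + 1 := ⟨q - 1, by omega⟩
  refine ⟨fun i => (x ^ (d * (i : ℕ))) a, ?_, ?_, ?_⟩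
  · have hsuf : ∀ k k' : ℕ, k < k' → k' < n + 1 →
        (x ^ (d * k)) a = (x ^ (d * k')) a → False := by
      intro k k' hkk' hk' heq
      have harith : d * k' = d * k + d * (k' - k) := by
        rw [← Nat.mul_add, Nat.add_sub_cancel' hkk'.le]
      rw [harith, pow_add, Equiv.Perm.mul_apply] at heq
      have h1 : (x ^ (d * (k' - k))) a = a :=
        ((Equiv.injective _) heq).symm
      have h2 : (n + 1) ∣ (k' - k) := hkey _ ((hfixiff _).1 h1)
      have h3 := Nat.le_of_dvd (by omega) h2
      omega
    intro i i' h
    rcases lt_trichotomy ((i : ℕ)) ((i' : ℕ)) with hlt | heq | hlt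
    · exact (hsuf i i' hlt i'.isLt h).elim
    · exact Fin.ext heq
    · exact (hsuf i' i hlt i.isLt h.symm).elim
  · intro i
    have h := hmemT (i : ℕ)
    rw [hTdef] at h
    obtain ⟨j, -, hj⟩ := Finset.mem_image.1 h
    exact ⟨j, hj.symm⟩
  · intro i
    rw [finRotate_succ_apply]
    have hval : ((i + 1 : Fin (n + 1)) : ℕ) = ((i : ℕ) + 1) % (n + 1) := by
      rw [Fin.val_add, Fin.val_one', Nat.mod_eq_of_lt (show 1 < n + 1 by omega)]
    show (x ^ d) ((x ^ (d * (i : ℕ))) a) = (x ^ (d * ((i + 1 : Fin (n + 1)) : ℕ))) a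
    rw [hval, ← Equiv.Perm.mul_apply, ← pow_add,
      show d + d * (i : ℕ) = d * ((i : ℕ) + 1) from by ring]
    exact hmod _
end
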